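/- arXiv:1804.09033 — 6 statements merged into one kernel-verified Lean document; each statement's English description precedes it below -/
import Mathlib

section
/- Let K be a field, and let M be a nonzero m×n matrix whose entries are linear forms in K[x₁,...,xₙ]. Suppose r := rk M (over K(x)) does not exceed the cardinality of K. Then there exist S ∈ GL_m(K) and T ∈ GL_n(K) and K-linearly independent linear forms L₁,...,Lₙ such that SMT = M⁽¹⁾L₁ + M⁽²⁾L₂ + ... + M⁽ⁿ⁾Lₙ with each M⁽ⁱ⁾ a constant matrix over K and M⁽¹⁾ equal to the block matrix with I_r in the upper-left corner and zeros elsewhere. -/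
open Matrix MvPolynomial Submodule Module

theorem aux_li_subfamily {K V : Type*} [Field K] [AddCommGroup V] [Module K V] {ι : Type*}
    (v : ι → V) (r : ℕ) (h : (r : Cardinal) ≤ Module.rank K (Submodule.span K (Set.range v))) :
    ∃ g : Fin r → ι, LinearIndependent K (v ∘ g) := by
  obtain ⟨b, hbsub, hbspan, hbli⟩ := exists_linearIndependent K (Set.range v)
  have hcard : (r : Cardinal) ≤ Cardinal.mk b := by
    rw [← hbspan, rank_span_set hbli] at h
    exact_mod_cast h
  have hne : Nonempty (ULift.{_} (Fin r) ↪ b) := by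
    refine (Cardinal.le_def _ _).1 ?_
    simpa using hcard
  obtain ⟨emb⟩ := hne
  choose g hg using fun j : Fin r => hbsub (emb ⟨j⟩).2
  refine ⟨g, ?_⟩
  have hvg : v ∘ g = Subtype.val ∘ (emb ∘ ULift.up) := by
    funext j; exact hg j
  rw [hvg]
  exact hbli.comp _ (emb.injective.comp (fun a b hab => congrArg ULift.down hab))

theorem aux_unit_submatrix {K : Type*} [Field K] {m n r : ℕ} (A : Matrix (Fin m) (Fin n) K)
    (h : r ≤ A.rank) : ∃ (f : Fin r → Fin m) (g : Fin r → Fin n),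
      IsUnit (A.submatrix f g) := by
  have hrow : (r : Cardinal) ≤ Module.rank K (span K (Set.range A)) := by
    rw [← Module.finrank_eq_rank]
    exact_mod_cast h.trans_eq (A.rank_eq_finrank_span_row)
  obtain ⟨f, hf⟩ := aux_li_subfamily A r hrow
  set B : Matrix (Fin r) (Fin n) K := A.submatrix f id with hB
  have hBrank : B.rank = r := by
    have : LinearIndependent K B := hf
    exact this.rank_matrix.trans (Fintype.card_fin r)
  have hcol : (r : Cardinal) ≤ Module.rank K (span K (Set.range Bᵀ)) := by
    rw [← Module.finrank_eq_rank]
    exact_mod_cast (hBrank.ge.trans_eq B.rank_eq_finrank_span_cols)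
  obtain ⟨g, hg⟩ := aux_li_subfamily Bᵀ r hcol
  refine ⟨f, g, ?_⟩
  rw [← Matrix.linearIndependent_cols_iff_isUnit]
  exact hg

theorem aux_rank_le {K : Type*} [Field K] {m n r : ℕ} (A : Matrix (Fin m) (Fin n) K)
    (f : Fin r → Fin m) (g : Fin r → Fin n) (h : IsUnit (A.submatrix f g)) :
    r ≤ A.rank := by
  classical
  set P : Matrix (Fin r) (Fin m) K := Matrix.of fun i k => if f i = k then 1 else 0 with hP
  set Q : Matrix (Fin n) (Fin r) K := Matrix.of fun k j => if g j = k then 1 else 0 with hQ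
  have key : P * A * Q = A.submatrix f g := by
    ext i j
    simp [Matrix.mul_apply, hP, hQ, ite_and, Finset.sum_ite_eq, Finset.sum_ite_eq']
  have h1 : (P * A * Q).rank = r := by
    rw [key, Matrix.rank_of_isUnit _ h, Fintype.card_fin]
  calc r = (P * A * Q).rank := h1.symm
    _ ≤ (P * A).rank := Matrix.rank_mul_le_left _ _
    _ ≤ A.rank := Matrix.rank_mul_le_right _ _

theorem aux_det_hom {K : Type*} [Field K] {s n : ℕ} (A : Matrix (Fin s) (Fin s) (MvPolynomial (Fin n) K))
    (h : ∀ i j, (A i j).IsHomogeneous 1) : A.det.IsHomogeneous s := by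
  rw [Matrix.det_apply]
  apply MvPolynomial.IsHomogeneous.sum
  intro σ' _
  have hprod : (∏ i, A (σ' i) i).IsHomogeneous s := by
    have := MvPolynomial.IsHomogeneous.prod Finset.univ (fun i => A (σ' i) i) (fun _ => 1)
      (fun i _ => h _ _)
    simpa using this
  rcases Int.units_eq_one_or (Equiv.Perm.sign σ') with hs | hs
  · rw [hs, one_smul]; exact hprod
  · rw [hs]
    have : (-1 : ℤˣ) • (∏ i, A (σ' i) i) = -(∏ i, A (σ' i) i) := by
      simp [Units.smul_def]
    rw [this]
    rw [← mem_homogeneousSubmodule] at hprod ⊢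
    exact neg_mem hprod

theorem aux_one_le_rank {K : Type*} [Field K] {m n : ℕ} (A : Matrix (Fin m) (Fin n) K) (hA : A ≠ 0) :
    1 ≤ A.rank := by
  obtain ⟨i, j, hij⟩ : ∃ i j, A i j ≠ 0 := by
    by_contra hc
    push_neg at hc
    exact hA (by ext i j; simpa using hc i j)
  apply aux_rank_le A (fun _ : Fin 1 => i) (fun _ => j)
  rw [Matrix.isUnit_iff_isUnit_det, Matrix.det_unique]
  exact (isUnit_iff_ne_zero).2 hij

set_option maxHeartbeats 1600000 in
theorem aux_exists_point {K : Type*} [Field K] {m n : ℕ}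
    (M : Matrix (Fin m) (Fin n) (MvPolynomial (Fin n) K))
    (hlin : ∀ i j, (M i j).IsHomogeneous 1)
    (r : ℕ)
    (hr : r = ((M.map (algebraMap (MvPolynomial (Fin n) K)
      (FractionRing (MvPolynomial (Fin n) K)))).rank))
    (hcard : (r : Cardinal) ≤ Cardinal.mk K) :
    ∃ a : Fin n → K, (M.map (eval a)).rank = r := by
  set ι := algebraMap (MvPolynomial (Fin n) K) (FractionRing (MvPolynomial (Fin n) K)) with hι
  have hinj : Function.Injective ι := IsFractionRing.injective _ _
  obtain ⟨f, g, hunit⟩ := aux_unit_submatrix (M.map ι) hr.le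
  have hsub : (M.map ι).submatrix f g = ((M.submatrix f g).map ι) := rfl
  have hDne : (M.submatrix f g).det ≠ 0 := by
    intro h0
    have : ι ((M.submatrix f g).det) = 0 := by rw [h0, map_zero]
    rw [RingHom.map_det] at this
    have hd := (Matrix.isUnit_iff_isUnit_det _).1 hunit
    rw [hsub] at hd
    have : ¬ IsUnit ((M.submatrix f g).map ι).det := by
      rw [show ((M.submatrix f g).map ι) = ι.mapMatrix (M.submatrix f g) from rfl, ← RingHom.map_det, this] at *
      exact fun hu => hu.ne_zero rfl
    exact this hd
  have hDhom : ((M.submatrix f g).det).IsHomogeneous r :=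
    aux_det_hom _ (fun i j => hlin _ _)
  have hex : ∃ a : Fin n → K, eval a ((M.submatrix f g).det) ≠ 0 := by
    by_contra hc
    push_neg at hc
    exact hDne (hDhom.eq_zero_of_forall_eval_eq_zero_of_le_card hc hcard)
  obtain ⟨a, ha⟩ := hex
  refine ⟨a, le_antisymm ?_ ?_⟩
  · -- rank ≤ r
    set s := (M.map (eval a)).rank with hs
    obtain ⟨f', g', hunit'⟩ := aux_unit_submatrix (M.map (eval a)) le_rfl
    have hdet' : eval a ((M.submatrix f' g').det) ≠ 0 := by
      have := (Matrix.isUnit_iff_isUnit_det _).1 hunit'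
      rw [show (M.map (eval a)).submatrix f' g' = (eval a).mapMatrix (M.submatrix f' g') from rfl,
        ← RingHom.map_det] at this
      exact this.ne_zero
    have hD' : (M.submatrix f' g').det ≠ 0 := fun h0 => hdet' (by rw [h0, map_zero])
    have hunitF : IsUnit ((M.map ι).submatrix f' g') := by
      rw [Matrix.isUnit_iff_isUnit_det,
        show (M.map ι).submatrix f' g' = ι.mapMatrix (M.submatrix f' g') from rfl,
        ← RingHom.map_det]
      exact isUnit_iff_ne_zero.2 fun h0 => hD' (hinj (by rw [h0, map_zero]))
    have := aux_rank_le (M.map ι) f' g' hunitF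
    omega
  · -- r ≤ rank
    apply aux_rank_le (M.map (eval a)) f g
    rw [Matrix.isUnit_iff_isUnit_det,
      show (M.map (eval a)).submatrix f g = (eval a).mapMatrix (M.submatrix f g) from rfl,
      ← RingHom.map_det]
    exact isUnit_iff_ne_zero.2 ha

theorem aux_normal_form {K : Type*} [Field K] {m n r : ℕ} (A : Matrix (Fin m) (Fin n) K)
    (h : A.rank = r) :
    ∃ (S : Matrix (Fin m) (Fin m) K) (T : Matrix (Fin n) (Fin n) K),
      IsUnit S ∧ IsUnit T ∧
      S * A * T = Matrix.of fun (a : Fin m) (b : Fin n) =>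
        if (a : ℕ) = (b : ℕ) ∧ (a : ℕ) < r then (1 : K) else 0 := by
  classical
  have hrm : r ≤ m := h ▸ A.rank_le_height
  have hrn : r ≤ n := h ▸ A.rank_le_width
  set φ := A.mulVecLin with hφ
  have hrange : finrank K (LinearMap.range φ) = r := h
  let w : Basis (Fin r) K (LinearMap.range φ) := finBasisOfFinrankEq K _ hrange
  choose u hu using fun j : Fin r => (w j).2
  have hker : finrank K (LinearMap.ker φ) = n - r := by
    have := φ.finrank_range_add_finrank_ker
    rw [hrange] at this
    simp only [Module.finrank_fin_fun] at this
    omega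
  let z : Basis (Fin (n - r)) K (LinearMap.ker φ) := finBasisOfFinrankEq K _ hker
  obtain ⟨q, hq⟩ := (LinearMap.range φ).exists_isCompl
  have hqrank : finrank K q = m - r := by
    have := Submodule.finrank_add_eq_of_isCompl hq
    rw [hrange, Module.finrank_fin_fun] at this
    omega
  let y : Basis (Fin (m - r)) K q := finBasisOfFinrankEq K _ hqrank
  set vfam : Fin r ⊕ Fin (n - r) → (Fin n → K) :=
    Sum.elim u (fun j => (z j : Fin n → K)) with hvfam
  set wfam : Fin r ⊕ Fin (m - r) → (Fin m → K) :=
    Sum.elim (fun i => (w i : Fin m → K)) (fun j => (y j : Fin m → K)) with hwfam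
  have hφu : ∀ j, φ (u j) = (w j : Fin m → K) := hu
  have hliu : LinearIndependent K u := by
    have h1 : LinearIndependent K (φ ∘ u) := by
      have : φ ∘ u = (fun i => ((w i : Fin m → K))) := funext hφu
      rw [this]
      exact w.linearIndependent.map' (LinearMap.range φ).subtype (ker_subtype _)
    exact h1.of_comp φ
  have hliz : LinearIndependent K (fun j => (z j : Fin n → K)) :=
    z.linearIndependent.map' (LinearMap.ker φ).subtype (ker_subtype _)
  have hdisj : Disjoint (span K (Set.range u)) (LinearMap.ker φ) := by
    rw [Submodule.disjoint_def]
    intro x hxu hxk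
    rw [mem_span_range_iff_exists_fun] at hxu
    obtain ⟨c, hc⟩ := hxu
    have h0 : (∑ i, c i • w i : LinearMap.range φ) = 0 := by
      apply Subtype.coe_injective
      push_cast
      simp only [← hφu]
      have : (∑ x : Fin r, c x • φ (u x)) = φ (∑ x : Fin r, c x • u x) := by
        simp [map_sum, _root_.map_smul]
      rw [this, hc]
      exact hxk
    have hc0 : ∀ i, c i = 0 := (Fintype.linearIndependent_iff.1 w.linearIndependent) c h0
    rw [← hc]
    simp [hc0]
  have hliv : LinearIndependent K vfam := by
    apply hliu.sum_type hliz
    apply Disjoint.mono_right _ hdisj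
    rw [span_le]
    rintro x ⟨j, rfl⟩
    exact (z j).2
  have hliw : LinearIndependent K wfam := by
    apply LinearIndependent.sum_type
    · exact w.linearIndependent.map' (LinearMap.range φ).subtype (ker_subtype _)
    · exact y.linearIndependent.map' q.subtype (ker_subtype _)
    · apply Disjoint.mono _ _ hq.disjoint
      · rw [span_le]; rintro x ⟨j, rfl⟩; exact (w j).2
      · rw [span_le]; rintro x ⟨j, rfl⟩; exact (y j).2
  have hnn : n = r + (n - r) := by omega
  have hmm : m = r + (m - r) := by omega
  let en : Fin n ≃ Fin r ⊕ Fin (n - r) := (finCongr hnn).trans finSumFinEquiv.symm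
  let em : Fin m ≃ Fin r ⊕ Fin (m - r) := (finCongr hmm).trans finSumFinEquiv.symm
  set T : Matrix (Fin n) (Fin n) K := Matrix.of fun i j => vfam (en j) i with hT
  set S' : Matrix (Fin m) (Fin m) K := Matrix.of fun i k => wfam (em k) i with hS'
  have hTunit : IsUnit T := by
    rw [← Matrix.linearIndependent_cols_iff_isUnit]
    have : T.col = vfam ∘ en := rfl
    rw [this]
    exact hliv.comp en en.injective
  have hSunit' : IsUnit S' := by
    rw [← Matrix.linearIndependent_cols_iff_isUnit]
    have : S'.col = wfam ∘ em := rfl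
    rw [this]
    exact hliw.comp em em.injective
  set E : Matrix (Fin m) (Fin n) K := Matrix.of fun (a : Fin m) (b : Fin n) =>
    if (a : ℕ) = (b : ℕ) ∧ (a : ℕ) < r then (1 : K) else 0 with hE
  have key : A * T = S' * E := by
    ext i j
    have hAT : (A * T) i j = φ (vfam (en j)) i := by
      simp [Matrix.mul_apply, hT, hφ, Matrix.mulVecLin_apply, Matrix.mulVec, dotProduct]
    rw [hAT]
    by_cases hj : (j : ℕ) < r
    · set k₀ : Fin m := ⟨(j : ℕ), lt_of_lt_of_le hj hrm⟩ with hk₀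
      have hcond : ∀ k : Fin m, ((k : ℕ) = (j : ℕ) ∧ (k : ℕ) < r) ↔ k = k₀ := by
        intro k
        constructor
        · rintro ⟨h1, -⟩; exact Fin.ext h1
        · rintro rfl; exact ⟨rfl, hj⟩
      have hSE : (S' * E) i j = S' i k₀ := by
        simp only [Matrix.mul_apply, hE, Matrix.of_apply, hcond]
        simp [Finset.sum_ite_eq']
      rw [hSE]
      -- en j = inl ⟨j, hj⟩
      set p : Fin r := ⟨(j : ℕ), hj⟩ with hp
      have henj : en j = Sum.inl p := by
        have hsymm : en.symm (Sum.inl p) = j := by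
          apply Fin.ext
          simp [en, hp]
        rw [← hsymm, Equiv.apply_symm_apply]
      have hemk : em k₀ = Sum.inl p := by
        have hsymm2 : em.symm (Sum.inl p) = k₀ := by
          apply Fin.ext
          simp [em, hp, hk₀]
        rw [← hsymm2, Equiv.apply_symm_apply]
      calc φ (vfam (en j)) i = (w p : Fin m → K) i := by
            rw [henj]; exact congrFun (hφu p) i
        _ = wfam (em k₀) i := by rw [hemk]; rfl
        _ = S' i k₀ := rfl
    · have hSE : (S' * E) i j = 0 := by
        simp only [Matrix.mul_apply, hE, Matrix.of_apply]
        rw [Finset.sum_eq_zero]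
        intro k _
        rw [if_neg, mul_zero]
        rintro ⟨h1, h2⟩
        exact hj (h1 ▸ h2)
      rw [hSE]
      -- en j = inr
      obtain ⟨s, hs⟩ : ∃ s, en j = Sum.inr s := by
        rcases hsum : en j with p | s
        · exfalso
          have : (j : ℕ) = (p : ℕ) := by
            have := congrArg en.symm hsum
            rw [Equiv.symm_apply_apply] at this
            rw [this]
            simp [en]
          exact hj (this ▸ p.2)
        · exact ⟨s, rfl⟩
      rw [hs]
      have : vfam (Sum.inr s) = (z s : Fin n → K) := rfl
      rw [this]
      have : φ (z s : Fin n → K) = 0 := (z s).2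
      rw [this]
      rfl
  have hdet : IsUnit S'.det := (Matrix.isUnit_iff_isUnit_det S').1 hSunit'
  refine ⟨S'⁻¹, T, Matrix.isUnit_nonsing_inv_iff.2 hSunit', hTunit, ?_⟩
  rw [Matrix.mul_assoc, key, ← Matrix.mul_assoc, Matrix.nonsing_inv_mul _ hdet, Matrix.one_mul]

theorem aux_deg_one {σ : Type*} (d : σ →₀ ℕ) (hd : Finsupp.degree d = 1) :
    ∃ k, d = Finsupp.single k 1 := by
  classical
  simp only [Finsupp.degree] at hd
  change ∑ i ∈ d.support, d i = 1 at hd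
  have hne : d.support.Nonempty := by
    rw [Finset.nonempty_iff_ne_empty]
    intro h0
    rw [h0] at hd
    simp at hd
  obtain ⟨k, hk⟩ := hne
  have hdk : 1 ≤ d k := Nat.one_le_iff_ne_zero.2 (Finsupp.mem_support_iff.1 hk)
  have hsum : d k + ∑ x ∈ d.support.erase k, d x = 1 := by
    rw [Finset.add_sum_erase _ _ hk]
    exact hd
  have h1 : d k = 1 ∧ ∑ x ∈ d.support.erase k, d x = 0 := by omega
  refine ⟨k, ?_⟩
  rw [Finsupp.eq_single_iff]
  constructor
  · intro x hx
    rcases eq_or_ne x k with rfl | hxk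
    · exact Finset.mem_singleton.2 rfl
    · exfalso
      have hxe : x ∈ d.support.erase k := Finset.mem_erase.2 ⟨hxk, hx⟩
      exact (Finsupp.mem_support_iff.1 hx) ((Finset.sum_eq_zero_iff).1 h1.2 x hxe)
  · exact h1.1

theorem aux_lin_expand {K : Type*} [Field K] {n : ℕ} (p : MvPolynomial (Fin n) K)
    (hp : p.IsHomogeneous 1) :
    p = ∑ k, C (coeff (Finsupp.single k 1) p) * X k := by
  classical
  apply MvPolynomial.ext
  intro d
  rw [coeff_sum]
  simp only [coeff_C_mul, coeff_X']
  by_cases hd : ∃ k, d = Finsupp.single k 1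
  · obtain ⟨k, rfl⟩ := hd
    rw [Finset.sum_eq_single k]
    · rw [if_pos rfl, mul_one]
    · intro b _ hbk
      rw [if_neg, mul_zero]
      intro h
      exact hbk (Finsupp.single_left_injective one_ne_zero h)
    · intro h
      exact absurd (Finset.mem_univ k) h
  · push_neg at hd
    have h0 : coeff d p = 0 := by
      apply hp.coeff_eq_zero
      intro h1
      obtain ⟨k, hk⟩ := aux_deg_one d h1
      exact hd k hk
    rw [h0, Finset.sum_eq_zero]
    intro k _
    rw [if_neg (fun h => hd k h.symm), mul_zero]

noncomputable def auxLmap (K : Type*) [Field K] (n : ℕ) :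
    (Fin n → K) →ₗ[K] MvPolynomial (Fin n) K where
  toFun c := ∑ j, C (c j) * X j
  map_add' a b := by
    simp only [Pi.add_apply, map_add, add_mul, Finset.sum_add_distrib]
  map_smul' t a := by
    simp only [Pi.smul_apply, smul_eq_mul, _root_.map_mul, RingHom.id_apply, smul_eq_C_mul,
      Finset.mul_sum, mul_assoc]

theorem auxLmap_ker {K : Type*} [Field K] {n : ℕ} :
    LinearMap.ker (auxLmap K n) = ⊥ := by
  classical
  rw [LinearMap.ker_eq_bot']
  intro c hc
  have : ∀ k, coeff (Finsupp.single k 1) (auxLmap K n c) = c k := by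
    intro k
    show coeff _ (∑ j, C (c j) * X j) = _
    rw [coeff_sum]
    simp only [coeff_C_mul, coeff_X']
    rw [Finset.sum_eq_single k]
    · rw [if_pos rfl, mul_one]
    · intro b _ hbk
      rw [if_neg (fun h => hbk (Finsupp.single_left_injective one_ne_zero h)), mul_zero]
    · intro h
      exact absurd (Finset.mem_univ k) h
  funext k
  rw [← this k, hc]
  simp

set_option maxHeartbeats 1600000 in
/-- Normalization of a matrix of linear forms: after multiplying by constant invertible
matrices on both sides, it can be written as `∑ᵢ M⁽ⁱ⁾ Lᵢ` with `L₁,…,Lₙ` independent linear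
forms, `M⁽ⁱ⁾` constant matrices and `M⁽¹⁾ = diag(I_r, 0)`. -/
theorem linear_form_matrix_normalization {K : Type*} [Field K] {m n : ℕ} [NeZero n]
    (M : Matrix (Fin m) (Fin n) (MvPolynomial (Fin n) K))
    (hlin : ∀ i j, (M i j).IsHomogeneous 1) (hM : M ≠ 0)
    (r : ℕ)
    (hr : r = ((M.map (algebraMap (MvPolynomial (Fin n) K)
      (FractionRing (MvPolynomial (Fin n) K)))).rank))
    (hcard : (r : Cardinal) ≤ Cardinal.mk K) :
    ∃ (S : Matrix (Fin m) (Fin m) K) (T : Matrix (Fin n) (Fin n) K),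
      IsUnit S ∧ IsUnit T ∧
      ∃ (L : Fin n → MvPolynomial (Fin n) K) (Mc : Fin n → Matrix (Fin m) (Fin n) K),
        (∀ i, (L i).IsHomogeneous 1) ∧ LinearIndependent K L ∧
        (S.map (C : K →+* MvPolynomial (Fin n) K) * M * T.map C
          = ∑ i, L i • (Mc i).map C) ∧
        (Mc 0 = Matrix.of fun (a : Fin m) (b : Fin n) =>
          if (a : ℕ) = (b : ℕ) ∧ (a : ℕ) < r then (1 : K) else 0) := by
  classical
  have hinj : Function.Injective (algebraMap (MvPolynomial (Fin n) K)
      (FractionRing (MvPolynomial (Fin n) K))) := IsFractionRing.injective _ _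
  have hr1 : 1 ≤ r := by
    rw [hr]
    apply aux_one_le_rank
    intro h0
    apply hM
    ext i j : 1
    have := congrFun (congrFun h0 i) j
    simp only [Matrix.map_apply, Matrix.zero_apply] at this
    exact hinj (by simpa using this)
  obtain ⟨a, ha⟩ := aux_exists_point M hlin r hr hcard
  have ha0 : a ≠ 0 := by
    rintro rfl
    have hz : M.map (eval (0 : Fin n → K)) = 0 := by
      ext i j
      simp only [Matrix.map_apply, Matrix.zero_apply, eval_zero, constantCoeff_eq]
      apply (hlin i j).coeff_eq_zero
      simp
    rw [hz, Matrix.rank_zero] at ha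
    omega
  obtain ⟨S₀, T₀, hS₀, hT₀, hNF⟩ := aux_normal_form (M.map (eval a)) ha
  -- construct an independent family `v` with `v 0 = a`
  have hn1 : n = 1 + (n - 1) := by
    have := Nat.pos_of_ne_zero (NeZero.ne n); omega
  set W := span K (Set.range (fun _ : Fin 1 => a)) with hW
  obtain ⟨q, hq⟩ := W.exists_isCompl
  have hWrank : finrank K W = 1 := by
    rw [hW, Set.range_const, finrank_span_singleton ha0]
  have hqrank : finrank K q = n - 1 := by
    have := Submodule.finrank_add_eq_of_isCompl hq
    rw [hWrank, Module.finrank_fin_fun] at this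
    omega
  let z : Basis (Fin (n - 1)) K q := finBasisOfFinrankEq K _ hqrank
  set vfam : Fin 1 ⊕ Fin (n - 1) → (Fin n → K) :=
    Sum.elim (fun _ : Fin 1 => a) (fun j => (z j : Fin n → K)) with hvfam
  have hlivfam : LinearIndependent K vfam := by
    apply LinearIndependent.sum_type
    · exact linearIndependent_unique_iff.2 ha0
    · exact z.linearIndependent.map' q.subtype (ker_subtype _)
    · apply Disjoint.mono _ _ hq.disjoint
      · exact hW.ge
      · rw [span_le]; rintro x ⟨j, rfl⟩; exact (z j).2
  let en : Fin n ≃ Fin 1 ⊕ Fin (n - 1) := (finCongr hn1).trans finSumFinEquiv.symm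
  set v : Fin n → (Fin n → K) := fun j => vfam (en j) with hv
  have hliv : LinearIndependent K v := hlivfam.comp en en.injective
  have hen0 : en (0 : Fin n) = Sum.inl 0 := by
    have h' : en.symm (Sum.inl (0 : Fin 1)) = (0 : Fin n) := by
      apply Fin.ext; simp [en]
    rw [← h', Equiv.apply_symm_apply]
  have hv0 : v 0 = a := by
    rw [hv]; simp only []; rw [hen0]; rfl
  -- the matrices T₁ (columns v) and its inverse
  set T₁ : Matrix (Fin n) (Fin n) K := Matrix.of fun i j => v j i with hT₁
  have hT₁unit : IsUnit T₁ := by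
    rw [← Matrix.linearIndependent_cols_iff_isUnit]
    exact hliv
  set U : Matrix (Fin n) (Fin n) K := T₁⁻¹ with hUdef
  have hUunit : IsUnit U := Matrix.isUnit_nonsing_inv_iff.2 hT₁unit
  have key1 : T₁ * U = 1 :=
    Matrix.mul_nonsing_inv _ ((Matrix.isUnit_iff_isUnit_det _).1 hT₁unit)
  set L : Fin n → MvPolynomial (Fin n) K := fun i => ∑ j, C (U i j) * X j with hL
  have hLhom : ∀ i, (L i).IsHomogeneous 1 := fun i =>
    MvPolynomial.IsHomogeneous.sum _ _ _ (fun j _ => isHomogeneous_C_mul_X _ _)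
  have hLind : LinearIndependent K L := by
    have h1 : LinearIndependent K (fun i => U i) :=
      Matrix.linearIndependent_rows_iff_isUnit.2 hUunit
    have h2 := h1.map' (auxLmap K n) auxLmap_ker
    exact h2
  have keyX : ∀ k, ∑ i, C (T₁ k i) * L i = X k := by
    intro k
    have step1 : ∀ i, C (T₁ k i) * L i = ∑ j, C (T₁ k i * U i j) * X j := by
      intro i
      rw [hL]
      rw [Finset.mul_sum]
      apply Finset.sum_congr rfl
      intro j _
      rw [_root_.map_mul, mul_assoc]
    rw [Finset.sum_congr rfl (fun i _ => step1 i), Finset.sum_comm]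
    have step2 : ∀ j, (∑ i, C (T₁ k i * U i j) * X j) = C ((T₁ * U) k j) * X j := by
      intro j
      rw [Matrix.mul_apply, ← Finset.sum_mul, ← map_sum]
    rw [Finset.sum_congr rfl (fun j _ => step2 j), key1]
    rw [Finset.sum_eq_single k]
    · simp [Matrix.one_apply]
    · intro b _ hbk
      simp [Matrix.one_apply, Ne.symm hbk]
    · intro h; exact absurd (Finset.mem_univ k) h
  set N : Matrix (Fin m) (Fin n) (MvPolynomial (Fin n) K) :=
    (S₀.map (C : K →+* MvPolynomial (Fin n) K) * M : Matrix (Fin m) (Fin n) (MvPolynomial (Fin n) K)) *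
      (T₀.map C : Matrix (Fin n) (Fin n) (MvPolynomial (Fin n) K)) with hN
  have hNlin : ∀ i j, (N i j).IsHomogeneous 1 := by
    intro i j
    rw [hN, Matrix.mul_apply]
    apply MvPolynomial.IsHomogeneous.sum
    intro l _
    have h1 : ((S₀.map (C : K →+* MvPolynomial (Fin n) K) * M) i l).IsHomogeneous 1 := by
      rw [Matrix.mul_apply]
      apply MvPolynomial.IsHomogeneous.sum
      intro k _
      exact (hlin k l).C_mul (S₀ i k)
    have h2 := h1.mul (isHomogeneous_C (Fin n) (T₀ l j))
    simpa using h2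
  set Mc : Fin n → Matrix (Fin m) (Fin n) K := fun i => N.map (eval (v i)) with hMc
  refine ⟨S₀, T₀, hS₀, hT₀, L, Mc, hLhom, hLind, ?_, ?_⟩
  · -- the decomposition
    show N = ∑ i, L i • (Mc i).map C
    ext i0 j0 : 1
    rw [Matrix.sum_apply]
    simp only [Matrix.smul_apply, Matrix.map_apply, smul_eq_mul, hMc]
    set p : MvPolynomial (Fin n) K := N i0 j0 with hp
    have hphom : p.IsHomogeneous 1 := hNlin i0 j0
    have heval : ∀ i, eval (v i) p = ∑ k, coeff (Finsupp.single k 1) p * v i k := by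
      intro i
      conv_lhs => rw [aux_lin_expand p hphom]
      rw [map_sum]
      apply Finset.sum_congr rfl
      intro k _
      rw [_root_.map_mul, eval_C, eval_X]
    calc p = ∑ k, C (coeff (Finsupp.single k 1) p) * X k := aux_lin_expand p hphom
      _ = ∑ k, C (coeff (Finsupp.single k 1) p) * ∑ i, C (T₁ k i) * L i := by
          apply Finset.sum_congr rfl
          intro k _
          rw [keyX k]
      _ = ∑ k, ∑ i, C (coeff (Finsupp.single k 1) p) * (C (T₁ k i) * L i) := by
          apply Finset.sum_congr rfl
          intro k _
          rw [Finset.mul_sum]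
      _ = ∑ i, ∑ k, C (coeff (Finsupp.single k 1) p) * (C (T₁ k i) * L i) :=
          Finset.sum_comm
      _ = ∑ i, L i * C (eval (v i) p) := by
          apply Finset.sum_congr rfl
          intro i _
          rw [heval i, map_sum, Finset.mul_sum]
          apply Finset.sum_congr rfl
          intro k _
          rw [_root_.map_mul]
          have : T₁ k i = v i k := rfl
          rw [this]
          ring
  · -- Mc 0 is the canonical rank matrix
    show N.map (eval (v 0)) = _
    rw [hv0]
    have hmm1 : N.map (eval a) = S₀ * (M.map (eval a)) * T₀ := by
      rw [hN, Matrix.map_mul, Matrix.map_mul]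
      congr 1
      · congr 1
        · ext i j; simp [Matrix.map_apply, eval_C]
      · ext i j; simp [Matrix.map_apply, eval_C]
    rw [hmm1, hNF]
end

section
/- Let K be a field and let M be an m×n matrix of linear forms of rank r over K(x), written as a block matrix M = [[A, B],[C, D]] where A is the leading principal r×r block, such that M = M⁽¹⁾L₁ + Σ_{i≥2} M⁽ⁱ⁾Lᵢ for independent linear forms Lᵢ and M⁽¹⁾ = diag(I_r, 0). Then D = 0 and CB = 0. -/
set_option linter.unusedSectionVars false
set_option maxHeartbeats 1000000

open MvPolynomial

section Aux
open Polynomial Matrix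

lemma finsupp_degree_one {σ : Type*} (d : σ →₀ ℕ) (hd : Finsupp.degree d = 1) :
    ∃ j, d = Finsupp.single j 1 := by
  classical
  have hne : d ≠ 0 := by
    intro h; rw [h, map_zero] at hd; omega
  obtain ⟨j, hj⟩ := Finsupp.ne_iff.mp hne
  simp only [Finsupp.coe_zero, Pi.zero_apply] at hj
  refine ⟨j, ?_⟩
  have hle : d j ≤ 1 := hd ▸ Finsupp.le_degree j d
  have hdj : d j = 1 := by omega
  ext i
  rcases eq_or_ne i j with rfl | hij
  · simp [hdj]
  · simp only [Finsupp.single_apply, if_neg (Ne.symm hij)]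
    by_contra hi
    have hsub : ({i, j} : Finset σ) ⊆ d.support := by
      intro x hx
      simp only [Finset.mem_insert, Finset.mem_singleton] at hx
      rcases hx with rfl | rfl <;> simp [Finsupp.mem_support_iff, hi, hj]
    have : d i + d j ≤ Finsupp.degree d := by
      rw [Finsupp.degree]
      calc d i + d j = ∑ x ∈ ({i, j} : Finset σ), d x := by
            rw [Finset.sum_insert (by simpa using hij), Finset.sum_singleton]
        _ ≤ _ := Finset.sum_le_sum_of_subset hsub
    omega

lemma linear_form_rep {K : Type*} [CommSemiring K] {n : ℕ}
    (P : MvPolynomial (Fin n) K) (h : P.IsHomogeneous 1) :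
    P = ∑ j, MvPolynomial.C (MvPolynomial.coeff (Finsupp.single j 1) P) * MvPolynomial.X j := by
  classical
  ext d
  rw [MvPolynomial.coeff_sum]
  simp only [MvPolynomial.coeff_C_mul, MvPolynomial.coeff_X']
  by_cases hd : ∃ j, d = Finsupp.single j 1
  · obtain ⟨j, rfl⟩ := hd
    rw [Finset.sum_eq_single j]
    · simp
    · intro b _ hb
      rw [if_neg, mul_zero]
      exact fun hc => hb (Finsupp.single_left_injective one_ne_zero hc)
    · simp
  · have h0 : MvPolynomial.coeff d P = 0 := by
      by_contra hc
      have := h hc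
      exact hd (finsupp_degree_one d (by rw [Finsupp.degree_eq_weight_one]; exact this))
    rw [h0, Finset.sum_eq_zero]
    intro b _
    rw [if_neg, mul_zero]
    exact fun hc => hd ⟨b, hc.symm⟩

variable {R : Type*} [CommRing R] [Nontrivial R] {r : ℕ} (B : Matrix (Fin r) (Fin r) R)

lemma key_adj_eq : (Polynomial.X - Polynomial.C B) * matPolyEquiv (adjugate (charmatrix B))
    = (charpoly B).map (algebraMap R (Matrix (Fin r) (Fin r) R)) := by
  have h1 : charmatrix B * adjugate (charmatrix B) = (charpoly B) • 1 := by
    rw [mul_adjugate]; rfl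
  have h2 := congrArg matPolyEquiv h1
  rwa [_root_.map_mul, matPolyEquiv_charmatrix, matPolyEquiv_smul_one] at h2

lemma matPolyEquiv_adj_charmatrix_coeff_high {t : ℕ} (ht : r ≤ t) :
    (matPolyEquiv (adjugate (charmatrix B))).coeff t = 0 := by
  set G := matPolyEquiv (adjugate (charmatrix B)) with hG
  have hrec : ∀ s : ℕ, G.coeff s - B * G.coeff (s + 1)
      = ((charpoly B).map (algebraMap R (Matrix (Fin r) (Fin r) R))).coeff (s+1) := by
    intro s
    have := congrArg (fun q => Polynomial.coeff q (s+1)) (key_adj_eq B)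
    simpa [sub_mul, Polynomial.coeff_X_mul, Polynomial.coeff_C_mul] using this
  have hstep : ∀ t : ℕ, r ≤ t → G.coeff t = B * G.coeff (t + 1) := by
    intro t ht
    have h := hrec t
    have hz : (charpoly B).coeff (t+1) = 0 := by
      apply Polynomial.coeff_eq_zero_of_natDegree_lt
      rw [charpoly_natDegree_eq_dim]; simp; omega
    rw [Polynomial.coeff_map, hz, map_zero] at h
    exact sub_eq_zero.mp h
  have hiter : ∀ s : ℕ, ∀ t : ℕ, r ≤ t → G.coeff t = B ^ s * G.coeff (t + s) := by
    intro s
    induction s with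
    | zero => intro t _; simp
    | succ s ih =>
        intro t ht
        rw [ih t ht, hstep (t + s) (by omega), ← mul_assoc, ← pow_succ,
          show t + s + 1 = t + (s + 1) by omega]
  rw [hiter (G.natDegree + 1) t ht, Polynomial.coeff_eq_zero_of_natDegree_lt (by omega),
    mul_zero]

lemma matPolyEquiv_adj_charmatrix_coeff_pred (hr : 0 < r) :
    (matPolyEquiv (adjugate (charmatrix B))).coeff (r - 1) = 1 := by
  obtain ⟨s, rfl⟩ : ∃ s, r = s + 1 := ⟨r - 1, by omega⟩
  have h := congrArg (fun q => Polynomial.coeff q (s + 1)) (key_adj_eq B)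
  simp only [sub_mul, Polynomial.coeff_sub, Polynomial.coeff_X_mul,
    Polynomial.coeff_C_mul, Polynomial.coeff_map] at h
  have hGr : (matPolyEquiv (adjugate (charmatrix B))).coeff (s + 1) = 0 :=
    matPolyEquiv_adj_charmatrix_coeff_high B le_rfl
  have hp : (charpoly B).coeff (s + 1) = 1 := by
    have hm := charpoly_monic B
    have hd : (charpoly B).natDegree = s + 1 := by rw [charpoly_natDegree_eq_dim]; simp
    have := hm.coeff_natDegree
    rwa [hd] at this
  rw [hGr, mul_zero, sub_zero, hp, _root_.map_one] at h
  simpa using h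

lemma adj_charmatrix_coeff_high {t : ℕ} (ht : r ≤ t) (k l : Fin r) :
    ((adjugate (charmatrix B)) k l).coeff t = 0 := by
  have := congrFun (congrFun (matPolyEquiv_adj_charmatrix_coeff_high B ht) k) l
  rwa [matPolyEquiv_coeff_apply] at this

lemma adj_charmatrix_coeff_pred (k l : Fin r) :
    ((adjugate (charmatrix B)) k l).coeff (r - 1) = if k = l then 1 else 0 := by
  have := congrFun (congrFun (matPolyEquiv_adj_charmatrix_coeff_pred B k.pos) k) l
  rwa [matPolyEquiv_coeff_apply, Matrix.one_apply] at this

end Aux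

/-- For a matrix of linear forms of rank `r` in the normalized form
`M = diag(I_r,0)·L₁ + ∑_{i≥2} M⁽ⁱ⁾Lᵢ` (with `L₁,…,Lₙ` independent linear forms),
the lower-right block `D` vanishes and the product `CB` of the lower-left and
upper-right blocks vanishes. -/
theorem block_D_zero_CB_zero {K : Type*} [Field K] {m n r : ℕ} [NeZero n] (hrm : r ≤ m) (hrn : r ≤ n)
    (M : Matrix (Fin m) (Fin n) (MvPolynomial (Fin n) K))
    (hlin : ∀ i j, (M i j).IsHomogeneous 1)
    (hrank : ((M.map (algebraMap (MvPolynomial (Fin n) K)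
      (FractionRing (MvPolynomial (Fin n) K)))).rank) = r)
    (L : Fin n → MvPolynomial (Fin n) K) (Mc : Fin n → Matrix (Fin m) (Fin n) K)
    (hL : ∀ i, (L i).IsHomogeneous 1) (hind : LinearIndependent K L)
    (hdec : M = ∑ i, L i • (Mc i).map (C : K →+* MvPolynomial (Fin n) K))
    (hM1 : ∀ (a : Fin m) (b : Fin n),
      Mc 0 a b = if (a : ℕ) = (b : ℕ) ∧ (a : ℕ) < r then 1 else 0) :
    (∀ (i : Fin m) (j : Fin n), r ≤ (i : ℕ) → r ≤ (j : ℕ) → M i j = 0) ∧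
    (∀ (i : Fin m) (j : Fin n), r ≤ (i : ℕ) → r ≤ (j : ℕ) →
      ∑ k : Fin r, M i ⟨k, lt_of_lt_of_le k.2 hrn⟩ * M ⟨k, lt_of_lt_of_le k.2 hrm⟩ j
        = 0) := by
  classical
  -- coefficient matrix of the linear forms
  set cM : Matrix (Fin n) (Fin n) K :=
    Matrix.of (fun k j => MvPolynomial.coeff (Finsupp.single j 1) (L k)) with hcM
  have hrep : ∀ k, L k = ∑ j, C (cM k j) * X j := fun k => linear_form_rep (L k) (hL k)
  -- rows of cM are linearly independent, hence cM is invertible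
  have hUnit : IsUnit cM := by
    rw [← Matrix.linearIndependent_rows_iff_isUnit]
    have hT : ∃ T : (Fin n → K) →ₗ[K] MvPolynomial (Fin n) K,
        ∀ w, T w = ∑ j, C (w j) * X j := by
      refine ⟨{ toFun := fun w => ∑ j, C (w j) * X j, map_add' := ?_, map_smul' := ?_ }, fun w => rfl⟩
      · intro a b
        simp [map_add, add_mul, Finset.sum_add_distrib]
      · intro a w
        simp [MvPolynomial.smul_eq_C_mul, Finset.mul_sum, map_mul, mul_assoc]
    obtain ⟨T, hTdef⟩ := hT
    apply LinearIndependent.of_comp T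
    have : (T ∘ fun k => cM k) = L := by
      funext k
      rw [Function.comp_apply, hTdef, ← hrep k]
    rwa [show cM.row = fun k => cM k from rfl, this]
  -- a point where L 0 = 1 and the other linear forms vanish
  obtain ⟨cU, hcU⟩ := hUnit
  set v : Fin n → K := Matrix.mulVec ((cU⁻¹ : (Matrix (Fin n) (Fin n) K)ˣ) : Matrix (Fin n) (Fin n) K)
    (Pi.single 0 1) with hv
  have hmv : Matrix.mulVec cM v = Pi.single 0 1 := by
    rw [hv, Matrix.mulVec_mulVec, ← hcU, Units.mul_inv, Matrix.one_mulVec]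
  have hsum : ∀ k : Fin n, ∑ j, cM k j * v j = (Pi.single 0 1 : Fin n → K) k := by
    intro k
    rw [← hmv]
    simp [Matrix.mulVec, dotProduct]
  have heval : ∀ k, MvPolynomial.eval v (L k) = (Pi.single 0 1 : Fin n → K) k := by
    intro k
    conv_lhs => rw [hrep k]
    rw [map_sum, ← hsum k]
    simp
  -- the entrywise decomposition of M
  have hMab : ∀ a b, M a b = ∑ k, L k * C (Mc k a b) := by
    intro a b
    rw [hdec]
    simp [Matrix.sum_apply, MvPolynomial.smul_eq_C_mul, mul_comm]
  have hevalM : ∀ a b, MvPolynomial.eval v (M a b) = Mc 0 a b := by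
    intro a b
    rw [hMab a b, map_sum]
    simp only [map_mul, heval, MvPolynomial.eval_C]
    rw [Finset.sum_eq_single 0]
    · simp
    · intro c _ hc; simp [Pi.single_eq_of_ne hc]
    · simp
  -- the algebra map φ : R → R[X] sending L 0 to (morally) X and fixing the other L k
  set Wp : Polynomial (MvPolynomial (Fin n) K) := Polynomial.X - Polynomial.C (L 0) with hWp
  set φ : MvPolynomial (Fin n) K →ₐ[K] Polynomial (MvPolynomial (Fin n) K) :=
    aeval (fun j => Polynomial.C (X j) + Polynomial.C (C (v j)) * Wp) with hφ
  have halg : ∀ a : K, algebraMap K (Polynomial (MvPolynomial (Fin n) K)) a = Polynomial.C (C a) := by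
    intro a
    rw [IsScalarTower.algebraMap_apply K (MvPolynomial (Fin n) K) (Polynomial (MvPolynomial (Fin n) K))]
    rfl
  have hφL : ∀ k, φ (L k) = Polynomial.C (L k)
      + Polynomial.C (C ((Pi.single 0 1 : Fin n → K) k)) * Wp := by
    intro k
    conv_lhs => rw [hrep k]
    rw [map_sum]
    have hterm : ∀ j, φ (C (cM k j) * X j)
        = Polynomial.C (C (cM k j) * X j) + Polynomial.C (C (cM k j * v j)) * Wp := by
      intro j
      rw [map_mul, hφ, aeval_C, aeval_X, halg, Polynomial.C_mul, C_mul, Polynomial.C_mul]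
      ring
    rw [Finset.sum_congr rfl (fun j _ => hterm j), Finset.sum_add_distrib,
      ← Finset.sum_mul, ← map_sum, ← map_sum Polynomial.C, ← map_sum (C : K →+* MvPolynomial (Fin n) K),
      hsum k, ← hrep k]
  have hφM : ∀ a b, φ (M a b) = Polynomial.C (M a b) + Polynomial.C (C (Mc 0 a b)) * Wp := by
    intro a b
    conv_lhs => rw [hMab a b]
    rw [map_sum]
    have hterm : ∀ k, φ (L k * C (Mc k a b))
        = Polynomial.C (L k * C (Mc k a b))
          + Polynomial.C (C ((Pi.single 0 1 : Fin n → K) k * Mc k a b)) * Wp := by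
      intro k
      rw [map_mul, hφL k, hφ, aeval_C, halg, Polynomial.C_mul, C_mul, Polynomial.C_mul]
      ring
    rw [Finset.sum_congr rfl (fun k _ => hterm k), Finset.sum_add_distrib,
      ← Finset.sum_mul, ← map_sum, ← map_sum Polynomial.C, ← map_sum (C : K →+* MvPolynomial (Fin n) K),
      ← hMab a b]
    congr 2
    rw [Finset.sum_eq_single 0]
    · simp
    · intro c _ hc; simp [Pi.single_eq_of_ne hc]
    · simp
  -- main common argument
  have main : ∀ (i : Fin m) (j : Fin n), r ≤ (i : ℕ) → r ≤ (j : ℕ) → M i j = 0 ∧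
      ∑ k : Fin r, M i ⟨k, lt_of_lt_of_le k.2 hrn⟩ * M ⟨k, lt_of_lt_of_le k.2 hrm⟩ j = 0 := by
    intro i j hi hj
    set κ : Fin r → Fin m := fun k => ⟨k, lt_of_lt_of_le k.2 hrm⟩ with hκ
    set lam : Fin r → Fin n := fun k => ⟨k, lt_of_lt_of_le k.2 hrn⟩ with hlam
    set A : Matrix (Fin r) (Fin r) (MvPolynomial (Fin n) K) := Matrix.of (fun a b => M (κ a) (lam b)) with hA
    set bb : Fin r → MvPolynomial (Fin n) K := fun a => M (κ a) j with hbb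
    set cc : Fin r → MvPolynomial (Fin n) K := fun a => M i (lam a) with hcc
    -- the relevant values of Mc 0
    have hMc0A : ∀ a b : Fin r, Mc 0 (κ a) (lam b) = if a = b then 1 else 0 := by
      intro a b
      rw [hM1]
      simp only [hκ, hlam]
      by_cases hab : a = b
      · subst hab; simp [a.2]
      · rw [if_neg, if_neg hab]
        simp only [not_and]
        intro hval
        exact absurd (Fin.ext hval) hab
    have hMc0b : ∀ a : Fin r, Mc 0 (κ a) j = 0 := by
      intro a
      rw [hM1, if_neg]
      simp only [hκ, not_and]
      intro hval
      omega
    have hMc0c : ∀ a : Fin r, Mc 0 i (lam a) = 0 := by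
      intro a
      rw [hM1, if_neg]
      simp only [not_and]
      intro _
      omega
    have hMc0d : Mc 0 i j = 0 := by
      rw [hM1, if_neg]
      simp only [not_and]
      intro _
      omega
    -- det A is nonzero
    have hevA : A.map (MvPolynomial.eval v) = 1 := by
      ext a b
      rw [Matrix.map_apply, hA, Matrix.of_apply, hevalM, hMc0A, Matrix.one_apply]
    have hdetA : A.det ≠ 0 := by
      intro h0
      have h1 := (MvPolynomial.eval v : MvPolynomial (Fin n) K →+* K).map_det A
      rw [RingHom.mapMatrix_apply] at h1
      rw [h0, map_zero, hevA, Matrix.det_one] at h1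
      exact zero_ne_one h1
    -- fraction field part: the bordered minor vanishes
    have hfinj : Function.Injective (algebraMap (MvPolynomial (Fin n) K)
        (FractionRing (MvPolynomial (Fin n) K))) :=
      IsFractionRing.injective (MvPolynomial (Fin n) K) (FractionRing (MvPolynomial (Fin n) K))
    set f : MvPolynomial (Fin n) K →+* FractionRing (MvPolynomial (Fin n) K) :=
      algebraMap (MvPolynomial (Fin n) K) (FractionRing (MvPolynomial (Fin n) K)) with hf
    set ρ : Fin r ⊕ Fin 1 → Fin m := Sum.elim κ (fun _ => i) with hρ
    set γ : Fin r ⊕ Fin 1 → Fin n := Sum.elim lam (fun _ => j) with hγ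
    set WR : Matrix (Fin r ⊕ Fin 1) (Fin r ⊕ Fin 1) (MvPolynomial (Fin n) K) :=
      Matrix.fromBlocks A (Matrix.of fun a (_ : Fin 1) => bb a)
        (Matrix.of fun (_ : Fin 1) a => cc a)
        (Matrix.of fun (_ : Fin 1) (_ : Fin 1) => M i j) with hWR
    have hblock : (M.map f).submatrix ρ γ = WR.map f := by
      ext a b
      cases a with
      | inl a =>
        cases b with
        | inl b => rfl
        | inr b => rfl
      | inr a =>
        cases b with
        | inl b => rfl
        | inr b => rfl
    have hrankW : ((M.map f).submatrix ρ γ).rank ≤ r := by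
      have key : ((1 : Matrix (Fin m) (Fin m) (FractionRing (MvPolynomial (Fin n) K))).submatrix
            ρ (Equiv.refl (Fin m))) * (M.map f)
          * ((1 : Matrix (Fin n) (Fin n) (FractionRing (MvPolynomial (Fin n) K))).submatrix
            (Equiv.refl (Fin n)) γ)
          = (M.map f).submatrix ρ γ := by
        rw [Matrix.one_submatrix_mul, Matrix.mul_submatrix_one]
        simp [Matrix.submatrix_submatrix]
      have h5 : ((M.map f).submatrix ρ γ).rank ≤ (M.map f).rank := by
        rw [← key]
        exact le_trans (Matrix.rank_mul_le_left _ _) (Matrix.rank_mul_le_right _ _)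
      exact le_of_le_of_eq h5 hrank
    have hdetW : (WR.map f).det = 0 := by
      by_contra hne
      have hWunit : IsUnit (WR.map f) :=
        (Matrix.isUnit_iff_isUnit_det _).mpr (isUnit_iff_ne_zero.mpr hne)
      have h1 : (WR.map f).rank = r + 1 := by
        rw [Matrix.rank_of_isUnit _ hWunit]
        simp
      rw [← hblock] at h1
      omega
    -- A is invertible over the fraction field
    have hdetAf : (A.map f).det = f A.det := (f.map_det A).symm
    have hdetAF : IsUnit (A.map f).det := by
      rw [hdetAf]
      refine isUnit_iff_ne_zero.mpr (fun h0 => hdetA (hfinj ?_))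
      rw [h0, map_zero]
    haveI : Invertible (A.map f) := (A.map f).invertibleOfIsUnitDet hdetAF
    have hfromB : WR.map f = Matrix.fromBlocks (A.map f)
        ((Matrix.of fun a (_ : Fin 1) => bb a).map f)
        ((Matrix.of fun (_ : Fin 1) a => cc a).map f)
        ((Matrix.of fun (_ : Fin 1) (_ : Fin 1) => M i j).map f) := by
      rw [hWR, Matrix.fromBlocks_map]
    have hschur : ((Matrix.of fun (_ : Fin 1) (_ : Fin 1) => M i j).map f
        - (Matrix.of fun (_ : Fin 1) a => cc a).map f * ⅟(A.map f)
          * (Matrix.of fun a (_ : Fin 1) => bb a).map f).det = 0 := by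
      have h2 := Matrix.det_fromBlocks₁₁ (A.map f) ((Matrix.of fun a (_ : Fin 1) => bb a).map f)
        ((Matrix.of fun (_ : Fin 1) a => cc a).map f)
        ((Matrix.of fun (_ : Fin 1) (_ : Fin 1) => M i j).map f)
      rw [← hfromB, hdetW] at h2
      rcases mul_eq_zero.mp h2.symm with h3 | h3
      · exact absurd h3 hdetAF.ne_zero
      · exact h3
    have hadjf : (A.map f).adjugate = (A.adjugate).map f := by
      have := f.map_adjugate A
      simpa [RingHom.mapMatrix_apply] using this.symm
    have hFeq : f (M i j) * (A.map f).det
        = ∑ k, ∑ l, f (cc k) * ((A.adjugate).map f) k l * f (bb l) := by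
      rw [Matrix.det_fin_one, Matrix.sub_apply, sub_eq_zero] at hschur
      have hmain : (((Matrix.of fun (_ : Fin 1) a => cc a).map f) * ⅟(A.map f)
            * ((Matrix.of fun a (_ : Fin 1) => bb a).map f)) 0 0 * (A.map f).det
          = ∑ k, ∑ l, f (cc k) * ((A.adjugate).map f) k l * f (bb l) := by
        rw [Matrix.invOf_eq_nonsing_inv, Matrix.inv_def, Ring.inverse_eq_inv', hadjf,
          Matrix.mul_smul, Matrix.smul_mul, Matrix.smul_apply, smul_eq_mul]
        rw [mul_comm (((A.map f).det)⁻¹) _, mul_assoc,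
          inv_mul_cancel₀ hdetAF.ne_zero, mul_one]
        rw [Matrix.mul_apply]
        simp_rw [Matrix.mul_apply, Finset.sum_mul]
        rw [Finset.sum_comm]
        rfl
      rw [← hmain, ← hschur]
      rfl
    -- pull the identity back to the polynomial ring
    have keyR : M i j * A.det = ∑ k, ∑ l, cc k * A.adjugate k l * bb l := by
      apply hfinj
      rw [map_mul, f.map_det, RingHom.mapMatrix_apply, map_sum]
      rw [hFeq]
      refine Finset.sum_congr rfl (fun k _ => ?_)
      rw [map_sum]
      refine Finset.sum_congr rfl (fun l _ => ?_)
      rw [map_mul, map_mul]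
      rfl
    -- apply φ to the key identity
    set B0 : Matrix (Fin r) (Fin r) (MvPolynomial (Fin n) K) := L 0 • 1 - A with hB0
    have hAchar : A.map φ = Matrix.charmatrix B0 := by
      rw [← Matrix.ext_iff]
      intro a b
      rw [Matrix.map_apply]
      have hAab : A a b = M (κ a) (lam b) := rfl
      rw [hAab, hφM, hMc0A]
      rcases eq_or_ne a b with rfl | hab
      · rw [Matrix.charmatrix_apply_eq, if_pos rfl]
        have hB0aa : B0 a a = L 0 - A a a := by
          simp [hB0, Matrix.sub_apply, Matrix.smul_apply, Matrix.one_apply]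
        rw [hB0aa, hWp, map_one, Polynomial.C_sub]
        have : A a a = M (κ a) (lam a) := rfl
        rw [← this]
        simp only [Polynomial.C_1, Polynomial.C_0, one_mul, zero_mul]
        ring
      · rw [Matrix.charmatrix_apply_ne _ _ _ hab, if_neg hab]
        have hB0ab : B0 a b = - A a b := by
          simp [hB0, Matrix.sub_apply, Matrix.smul_apply, Matrix.one_apply, hab]
        rw [hB0ab, map_zero, map_neg]
        have : A a b = M (κ a) (lam b) := rfl
        rw [← this]
        simp only [Polynomial.C_1, Polynomial.C_0, one_mul, zero_mul]
        ring
    have hφd : φ (M i j) = Polynomial.C (M i j) := by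
      rw [hφM, hMc0d]; simp
    have hφc : ∀ k, φ (cc k) = Polynomial.C (cc k) := by
      intro k
      have : cc k = M i (lam k) := rfl
      rw [this, hφM, hMc0c]; simp
    have hφb : ∀ k, φ (bb k) = Polynomial.C (bb k) := by
      intro k
      have : bb k = M (κ k) j := rfl
      rw [this, hφM, hMc0b]; simp
    have hφadj : ∀ k l, φ (A.adjugate k l) = (Matrix.charmatrix B0).adjugate k l := by
      intro k l
      have h9 := φ.map_adjugate A
      have h10 : (φ.mapMatrix A.adjugate) k l = ((φ.mapMatrix A).adjugate) k l := by rw [h9]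
      simpa [AlgHom.mapMatrix_apply, Matrix.map_apply, hAchar] using h10
    have hPoly : Polynomial.C (M i j) * Matrix.charpoly B0
        = ∑ k, ∑ l, Polynomial.C (cc k) * (Matrix.charmatrix B0).adjugate k l
            * Polynomial.C (bb l) := by
      have h6 := congrArg φ keyR
      rw [map_mul, φ.map_det, AlgHom.mapMatrix_apply, hAchar, hφd, map_sum] at h6
      rw [show Matrix.charpoly B0 = (Matrix.charmatrix B0).det from rfl]
      rw [h6]
      refine Finset.sum_congr rfl fun k _ => ?_
      rw [map_sum]
      refine Finset.sum_congr rfl fun l _ => ?_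
      rw [map_mul, map_mul, hφc, hφb, hφadj]
    have hterm : ∀ (x y : MvPolynomial (Fin n) K)
        (q : Polynomial (MvPolynomial (Fin n) K)) (t : ℕ),
        (Polynomial.C x * q * Polynomial.C y).coeff t = x * y * q.coeff t := by
      intro x y q t
      rw [show Polynomial.C x * q * Polynomial.C y
        = Polynomial.C x * Polynomial.C y * q by ring, ← Polynomial.C_mul,
        Polynomial.coeff_C_mul]
    have hcoeffr : (Matrix.charpoly B0).coeff r = 1 := by
      have hm := Matrix.charpoly_monic B0
      have hd : (Matrix.charpoly B0).natDegree = r := by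
        rw [Matrix.charpoly_natDegree_eq_dim]; simp
      have := hm.coeff_natDegree
      rwa [hd] at this
    have hD : M i j = 0 := by
      have h7 := congrArg (fun q => Polynomial.coeff q r) hPoly
      simp only [Polynomial.finset_sum_coeff, Polynomial.coeff_C_mul, hterm] at h7
      rw [hcoeffr, mul_one] at h7
      have hz : ∀ k l : Fin r,
          cc k * bb l * ((Matrix.charmatrix B0).adjugate k l).coeff r = 0 := by
        intro k l
        rw [adj_charmatrix_coeff_high B0 le_rfl, mul_zero]
      simpa [hz] using h7
    refine ⟨hD, ?_⟩
    rcases Nat.eq_zero_or_pos r with hr0 | hrpos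
    · haveI : IsEmpty (Fin r) := ⟨fun x => by
        have := x.2
        omega⟩
      simp
    · have h8 := congrArg (fun q => Polynomial.coeff q (r - 1)) hPoly
      simp only [Polynomial.finset_sum_coeff, Polynomial.coeff_C_mul, hterm] at h8
      rw [hD, zero_mul] at h8
      simp only [adj_charmatrix_coeff_pred, mul_ite, mul_one, mul_zero] at h8
      have h9 : (0 : MvPolynomial (Fin n) K) = ∑ k : Fin r, cc k * bb k := by
        rw [h8]
        refine Finset.sum_congr rfl fun k _ => ?_
        simp
      exact h9.symm

  refine ⟨fun i j hi hj => (main i j hi hj).1, fun i j hi hj => (main i j hi hj).2⟩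
end

section
/- Let K be a field with char K ≠ 2 and let H̃ ∈ K[x]ᵐ be quadratic homogeneous with Jacobian matrix M̃ = [[A,B],[C,D]] of rank r in the normalized form (M̃ = diag(I_r,0)·L₁ + Σ M̃⁽ⁱ⁾Lᵢ, so D = 0 and CB = 0). If C ≠ 0, then there exists v ∈ Kⁿ whose first r coordinates are not all zero, such that (J H̃)·v = diag(I_r, 0)·x. -/
set_option linter.unusedSectionVars false

namespace JacAux
open MvPolynomial

variable {R : Type*} [CommSemiring R] {σ : Type*}

theorem my_pderiv_comm (i j : σ) (p : MvPolynomial σ R) :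
    pderiv i (pderiv j p) = pderiv j (pderiv i p) := by
  classical
  induction p using MvPolynomial.induction_on with
  | C a => simp [pderiv_C]
  | add p q hp hq => simp [map_add, hp, hq]
  | mul_X p k hp =>
    simp only [pderiv_mul, pderiv_X, map_add, hp, map_mul]
    rcases eq_or_ne k i with rfl | hki <;> rcases eq_or_ne k j with rfl | hkj <;>
      simp_all [Pi.single_apply, pderiv_C]

theorem single_add_sub {m : σ →₀ ℕ} {j : σ} (h : m j ≠ 0) [DecidableEq σ] :
    Finsupp.single j 1 + (m - Finsupp.single j 1) = m := by
  ext k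
  rcases eq_or_ne k j with rfl | hk
  · simp [Nat.one_le_iff_ne_zero.mpr h, Nat.add_sub_cancel']
  · simp [Finsupp.single_apply, Ne.symm hk]

theorem X_mul_pderiv_monomial (m : σ →₀ ℕ) (c : R) (j : σ) [DecidableEq σ] :
    X j * pderiv j (monomial m c) = monomial m (c * m j) := by
  rw [pderiv_monomial, X, monomial_mul]
  rcases eq_or_ne (m j) 0 with h0 | h0
  · simp [h0]
  · rw [one_mul, single_add_sub h0]

/-- Euler's identity -/
theorem my_euler [Fintype σ] {d : ℕ} {p : MvPolynomial σ R} (hp : p.IsHomogeneous d) :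
    ∑ j : σ, X j * pderiv j p = (d : MvPolynomial σ R) * p := by
  classical
  have key : ∀ m ∈ p.support,
      ∑ j : σ, X j * pderiv j (monomial m (coeff m p))
        = (d : MvPolynomial σ R) * monomial m (coeff m p) := by
    intro m hm
    have hdeg : ∑ j : σ, m j = d := by
      have h1 : m.degree = d := by
        rw [Finsupp.degree_eq_weight_one]; exact hp (MvPolynomial.mem_support_iff.mp hm)
      rw [← h1, Finsupp.degree]
      exact (Finset.sum_subset (Finset.subset_univ _)
        (by simp [Finsupp.notMem_support_iff])).symm
    calc ∑ j : σ, X j * pderiv j (monomial m (coeff m p))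
        = ∑ j : σ, monomial m (coeff m p * (m j : R)) := by
          exact Finset.sum_congr rfl fun j _ => X_mul_pderiv_monomial m (coeff m p) j
      _ = monomial m (coeff m p * ((∑ j : σ, m j : ℕ) : R)) := by
          rw [← map_sum (monomial m) _ Finset.univ, ← Finset.mul_sum, Nat.cast_sum]
      _ = (d : MvPolynomial σ R) * monomial m (coeff m p) := by
          rw [hdeg, ← map_natCast (C : R →+* MvPolynomial σ R) d, C_mul_monomial,
            mul_comm ((d:ℕ) : R) _]
  calc ∑ j : σ, X j * pderiv j p
      = ∑ j : σ, X j * pderiv j (∑ m ∈ p.support, monomial m (coeff m p)) := by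
        rw [support_sum_monomial_coeff]
    _ = ∑ m ∈ p.support, ∑ j : σ, X j * pderiv j (monomial m (coeff m p)) := by
        simp only [map_sum, Finset.mul_sum]
        exact Finset.sum_comm
    _ = ∑ m ∈ p.support, (d : MvPolynomial σ R) * monomial m (coeff m p) :=
        Finset.sum_congr rfl key
    _ = (d : MvPolynomial σ R) * p := by
        rw [← Finset.mul_sum, support_sum_monomial_coeff]

variable {R : Type*} [CommSemiring R] {σ : Type*}

theorem degree_one_single [DecidableEq σ] {m : σ →₀ ℕ} (h1 : m.degree = 1) {j : σ}
    (hj : m j ≠ 0) : m = Finsupp.single j 1 := by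
  have hdeg : ∀ k, m k ≤ m.degree := fun k => Finsupp.le_degree k m
  have hmj : m j = 1 := le_antisymm (h1 ▸ hdeg j) (Nat.one_le_iff_ne_zero.mpr hj)
  ext k
  rcases eq_or_ne k j with rfl | hk
  · simp [hmj]
  · simp only [Finsupp.single_apply, if_neg (Ne.symm hk)]
    by_contra hmk
    have hsub : {j, k} ⊆ m.support := by
      intro x hx
      simp only [Finset.mem_insert, Finset.mem_singleton] at hx
      rcases hx with rfl | rfl <;> simp [Finsupp.mem_support_iff, hj, hmk]
    have : m j + m k ≤ m.degree := by
      rw [Finsupp.degree]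
      calc m j + m k = ∑ x ∈ ({j, k} : Finset σ), m x := by
            rw [Finset.sum_insert (by simp [Ne.symm hk]), Finset.sum_singleton]
        _ ≤ _ := Finset.sum_le_sum_of_subset hsub
    omega

/-- partial derivative of homogeneous degree-1 polynomial is the corresponding constant -/
theorem pderiv_isHomogeneous_one [DecidableEq σ] {p : MvPolynomial σ R}
    (hp : p.IsHomogeneous 1) (j : σ) :
    pderiv j p = C (coeff (Finsupp.single j 1) p) := by
  have hdeg : ∀ m ∈ p.support, m.degree = 1 := by
    intro m hm
    rw [Finsupp.degree_eq_weight_one]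
    exact hp (MvPolynomial.mem_support_iff.mp hm)
  conv_lhs => rw [← p.support_sum_monomial_coeff]
  rw [map_sum]
  rcases Finset.decidableMem (Finsupp.single j 1) p.support with hns | hs
  · rw [Finset.sum_eq_zero, MvPolynomial.notMem_support_iff.mp hns, map_zero]
    intro m hm
    have hmj : m j = 0 := by
      by_contra h
      exact hns (degree_one_single (hdeg m hm) h ▸ hm)
    rw [pderiv_monomial, hmj, Nat.cast_zero, mul_zero, map_zero]
  · rw [Finset.sum_eq_single (Finsupp.single j 1)]
    · rw [pderiv_monomial]
      simp
    · intro m hm hne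
      have hmj : m j = 0 := by
        by_contra h
        exact hne (degree_one_single (hdeg m hm) h)
      rw [pderiv_monomial, hmj, Nat.cast_zero, mul_zero, map_zero]
    · intro h; exact absurd hs h

end JacAux

namespace JacAux
open Polynomial

variable {A : Type*} [CommRing A] [Nontrivial A]

namespace DetAux

variable {t : ℕ} (N : Matrix (Fin (t+1)) (Fin (t+1)) A)

/-- the perturbed matrix -/
noncomputable def Q : Matrix (Fin (t+1)) (Fin (t+1)) (Polynomial A) :=
  Matrix.of fun p q => (Polynomial.C (N p q) +
      if p = q ∧ p ≠ Fin.last t then Polynomial.X else 0)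

/-- fixed points (other than `last`) of a permutation -/
def fx (σ : Equiv.Perm (Fin (t+1))) : Finset (Fin (t+1)) :=
  Finset.univ.filter (fun p => σ p = p ∧ p ≠ Fin.last t)

theorem prod_eq (σ : Equiv.Perm (Fin (t+1))) :
    (∏ p, Q N (σ p) p) = (∏ p ∈ fx σ, (X + C (N p p))) *
      C (∏ p ∈ Finset.univ.filter (fun p => ¬(σ p = p ∧ p ≠ Fin.last t)), N (σ p) p) := by
  rw [← Finset.prod_filter_mul_prod_filter_not Finset.univ
    (fun p => σ p = p ∧ p ≠ Fin.last t), map_prod]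
  congr 1
  · refine Finset.prod_congr rfl fun p hp => ?_
    simp only [fx, Finset.mem_filter] at hp
    obtain ⟨-, h1, h2⟩ := hp
    rw [show Q N (σ p) p = C (N p p) + X by simp [Q, h1, h2], add_comm]
  · refine Finset.prod_congr rfl fun p hp => ?_
    simp only [Finset.mem_filter, Finset.mem_univ, true_and, not_and, not_not] at hp
    have : ¬(σ p = p ∧ σ p ≠ Fin.last t) := by
      rintro ⟨h1, h2⟩
      have hpl := hp h1
      rw [h1, hpl] at h2
      exact h2 rfl
    simp only [Q, Matrix.of_apply, if_neg this, add_zero]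

theorem coeff_prod (σ : Equiv.Perm (Fin (t+1))) (k : ℕ) :
    (∏ p, Q N (σ p) p).coeff k = (∏ p ∈ fx σ, (X + C (N p p))).coeff k *
      ∏ p ∈ Finset.univ.filter (fun p => ¬(σ p = p ∧ p ≠ Fin.last t)), N (σ p) p := by
  rw [prod_eq, coeff_mul_C]

theorem G_natDegree (s : Finset (Fin (t+1))) :
    (∏ p ∈ s, (X + C (N p p))).natDegree = s.card := by
  rw [Polynomial.natDegree_prod_of_monic _ _ (fun i _ => monic_X_add_C _)]
  simp [Polynomial.natDegree_X_add_C]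

theorem exists_moved {σ : Equiv.Perm (Fin (t+1))} (hσ : σ ≠ 1) :
    ∃ p₁, p₁ ≠ Fin.last t ∧ σ p₁ ≠ p₁ := by
  have : ∃ p, σ p ≠ p := by
    by_contra h
    push_neg at h
    exact hσ (Equiv.ext h)
  obtain ⟨p₀, hp₀⟩ := this
  by_cases hne : p₀ = Fin.last t
  · refine ⟨σ p₀, ?_, fun h => hp₀ (σ.injective h)⟩
    rw [← hne]; exact hp₀
  · exact ⟨p₀, hne, hp₀⟩

theorem fx_subset {σ : Equiv.Perm (Fin (t+1))} {p₁ : Fin (t+1)} (h1 : p₁ ≠ Fin.last t)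
    (h2 : σ p₁ ≠ p₁) : fx σ ⊆ (Finset.univ.erase (Fin.last t)).erase p₁ := by
  intro p hp
  simp only [fx, Finset.mem_filter] at hp
  refine Finset.mem_erase.mpr ⟨?_, Finset.mem_erase.mpr ⟨hp.2.2, Finset.mem_univ _⟩⟩
  rintro rfl
  exact h2 hp.2.1

theorem card_erase_erase {p₁ : Fin (t+1)} (h1 : p₁ ≠ Fin.last t) :
    ((Finset.univ.erase (Fin.last t)).erase p₁).card = t - 1 := by
  rw [Finset.card_erase_of_mem (Finset.mem_erase.mpr ⟨h1, Finset.mem_univ _⟩),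
    Finset.card_erase_of_mem (Finset.mem_univ _)]
  simp

theorem fx_one : fx (1 : Equiv.Perm (Fin (t+1))) = Finset.univ.erase (Fin.last t) := by
  ext p; simp [fx, Finset.mem_erase, and_comm]

theorem notfx_one : Finset.univ.filter
    (fun p => ¬((1 : Equiv.Perm (Fin (t+1))) p = p ∧ p ≠ Fin.last t)) = {Fin.last t} := by
  ext p; simp [eq_comm]



theorem coeff_det (k : ℕ) : (Q N).det.coeff k =
    ∑ σ : Equiv.Perm (Fin (t+1)), Equiv.Perm.sign σ • ((∏ p, Q N (σ p) p).coeff k) := by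
  rw [Matrix.det_apply, Polynomial.finset_sum_coeff]
  exact Finset.sum_congr rfl fun σ _ => Polynomial.coeff_smul _ _ _

theorem part_a (ht : 1 ≤ t) (hdet : (Q N).det = 0) : N (Fin.last t) (Fin.last t) = 0 := by
  have h0 : (Q N).det.coeff t = 0 := by rw [hdet]; simp
  rw [coeff_det] at h0
  rw [Finset.sum_eq_single 1] at h0
  · rw [map_one, one_smul, coeff_prod, fx_one, notfx_one, Finset.prod_singleton,
      Equiv.Perm.one_apply] at h0
    have hG : (∏ p ∈ Finset.univ.erase (Fin.last t), (X + C (N p p))).coeff t = 1 := by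
      have hd : (∏ p ∈ Finset.univ.erase (Fin.last t), (X + C (N p p))).natDegree = t := by
        rw [G_natDegree, Finset.card_erase_of_mem (Finset.mem_univ _)]; simp
      have := (monic_prod_of_monic (Finset.univ.erase (Fin.last t))
        (fun p => X + C (N p p)) (fun i _ => monic_X_add_C _)).coeff_natDegree
      rwa [hd] at this
    rwa [hG, one_mul] at h0
  · intro σ _ hσ
    obtain ⟨p₁, hp₁, hmoved⟩ := exists_moved hσ
    have hcard : (fx σ).card ≤ t - 1 :=
      (Finset.card_le_card (fx_subset hp₁ hmoved)).trans (card_erase_erase hp₁).le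
    have hz : (∏ p ∈ fx σ, (X + C (N p p))).coeff t = 0 := by
      apply Polynomial.coeff_eq_zero_of_natDegree_lt
      rw [G_natDegree]
      omega
    rw [coeff_prod, hz, zero_mul, smul_zero]
  · simp

theorem part_b (ht : 1 ≤ t) (hdet : (Q N).det = 0) :
    ∑ p ∈ Finset.univ.erase (Fin.last t), N p (Fin.last t) * N (Fin.last t) p = 0 := by
  classical
  have ha := part_a N ht hdet
  have h0 : (Q N).det.coeff (t-1) = 0 := by rw [hdet]; simp
  rw [coeff_det] at h0
  set T : Finset (Equiv.Perm (Fin (t+1))) :=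
    (Finset.univ.erase (Fin.last t)).image (fun p => Equiv.swap (Fin.last t) p) with hT
  rw [← Finset.sum_subset (Finset.subset_univ T)] at h0; swap
  · intro σ _ hσT
    rcases eq_or_ne σ 1 with rfl | hσ
    · rw [map_one, one_smul, coeff_prod, notfx_one, Finset.prod_singleton,
        Equiv.Perm.one_apply, ha, mul_zero]
    obtain ⟨p₁, hp₁, hmoved⟩ := exists_moved hσ
    have hsub := fx_subset hp₁ hmoved
    have hcard : (fx σ).card ≤ t - 1 :=
      (Finset.card_le_card hsub).trans (card_erase_erase hp₁).le
    rcases lt_or_eq_of_le hcard with hlt | heq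
    · rw [coeff_prod, Polynomial.coeff_eq_zero_of_natDegree_lt, zero_mul, smul_zero]
      rw [G_natDegree]; exact hlt
    · exfalso
      have hE : fx σ = (Finset.univ.erase (Fin.last t)).erase p₁ :=
        Finset.eq_of_subset_of_card_le hsub (by rw [card_erase_erase hp₁, heq])
      have hfix : ∀ q, q ≠ Fin.last t → q ≠ p₁ → σ q = q := by
        intro q h1 h2
        have hq : q ∈ fx σ := by
          rw [hE]
          exact Finset.mem_erase.mpr ⟨h2, Finset.mem_erase.mpr ⟨h1, Finset.mem_univ _⟩⟩
        simp only [fx, Finset.mem_filter] at hq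
        exact hq.2.1
      have hσp₁ : σ p₁ = Fin.last t := by
        by_contra h
        exact hmoved (σ.injective (hfix (σ p₁) h hmoved))
      have hl : σ (Fin.last t) ≠ Fin.last t := fun h =>
        hp₁ (σ.injective (h.trans hσp₁.symm)).symm
      have hσlast : σ (Fin.last t) = p₁ := by
        by_contra h
        exact hl (σ.injective (hfix (σ (Fin.last t)) hl h))
      have hswap : σ = Equiv.swap (Fin.last t) p₁ := by
        apply Equiv.ext; intro q
        rcases eq_or_ne q (Fin.last t) with rfl | h1
        · rw [hσlast, Equiv.swap_apply_left]
        rcases eq_or_ne q p₁ with rfl | h2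
        · rw [hσp₁, Equiv.swap_apply_right]
        · rw [hfix q h1 h2, Equiv.swap_apply_of_ne_of_ne h1 h2]
      exact hσT (hswap ▸ Finset.mem_image_of_mem _
        (Finset.mem_erase.mpr ⟨hp₁, Finset.mem_univ _⟩))
  rw [hT, Finset.sum_image (fun p hp q hq h => by
    simpa [Equiv.swap_apply_left] using congrArg (fun e => e (Fin.last t)) h)] at h0
  have hterm : ∀ p₁ ∈ Finset.univ.erase (Fin.last t),
      Equiv.Perm.sign (Equiv.swap (Fin.last t) p₁) •
        ((∏ p, Q N ((Equiv.swap (Fin.last t) p₁) p) p).coeff (t-1))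
      = -(N (Fin.last t) p₁ * N p₁ (Fin.last t)) := by
    intro p₁ hp₁mem
    have hp₁ : p₁ ≠ Fin.last t := (Finset.mem_erase.mp hp₁mem).1
    have hfxswap : fx (Equiv.swap (Fin.last t) p₁) =
        (Finset.univ.erase (Fin.last t)).erase p₁ := by
      ext q
      simp only [fx, Finset.mem_filter, Finset.mem_erase, Finset.mem_univ, true_and, and_true]
      constructor
      · rintro ⟨hq1, hq2⟩
        refine ⟨fun h => ?_, hq2⟩
        rw [h, Equiv.swap_apply_right] at hq1
        exact hp₁ hq1.symm
      · rintro ⟨hq1, hq2⟩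
        exact ⟨Equiv.swap_apply_of_ne_of_ne hq2 hq1, hq2⟩
    have hnotfx : Finset.univ.filter
        (fun p => ¬((Equiv.swap (Fin.last t) p₁) p = p ∧ p ≠ Fin.last t)) =
        ({p₁, Fin.last t} : Finset (Fin (t+1))) := by
      ext q
      simp only [Finset.mem_filter, Finset.mem_univ, true_and, Finset.mem_insert,
        Finset.mem_singleton, not_and, not_not]
      constructor
      · intro h
        by_contra hc
        push_neg at hc
        exact hc.2 (h (Equiv.swap_apply_of_ne_of_ne hc.2 hc.1))
      · rintro (rfl | rfl)
        · intro h
          rw [Equiv.swap_apply_right] at h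
          exact h.symm
        · exact fun _ => rfl
    have hG : (∏ p ∈ fx (Equiv.swap (Fin.last t) p₁), (X + C (N p p))).coeff (t-1) = 1 := by
      have hd : (∏ p ∈ fx (Equiv.swap (Fin.last t) p₁), (X + C (N p p))).natDegree = t - 1 := by
        rw [G_natDegree, hfxswap, card_erase_erase hp₁]
      have := (monic_prod_of_monic (fx (Equiv.swap (Fin.last t) p₁))
        (fun p => X + C (N p p)) (fun i _ => monic_X_add_C _)).coeff_natDegree
      rwa [hd] at this
    rw [coeff_prod, hG, one_mul, hnotfx, Finset.prod_pair hp₁,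
      Equiv.swap_apply_right, Equiv.swap_apply_left,
      Equiv.Perm.sign_swap (Ne.symm hp₁)]
    simp [Units.smul_def]
  rw [Finset.sum_congr rfl hterm] at h0
  rw [Finset.sum_neg_distrib, neg_eq_zero] at h0
  rw [← h0]
  exact Finset.sum_congr rfl fun p hp => mul_comm _ _

end DetAux

end JacAux

open MvPolynomial

/-- The Jacobian matrix of a polynomial map. -/
noncomputable def jacobian {K : Type*} [Field K] {m n : ℕ}
    (H : Fin m → MvPolynomial (Fin n) K) :
    Matrix (Fin m) (Fin n) (MvPolynomial (Fin n) K) :=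
  fun i j => pderiv j (H i)

/-- If `char K ≠ 2` and the Jacobian of a quadratic homogeneous map `H` is in the
normalized form of rank `r` with nonzero lower-left block `C`, then there is `v ∈ Kⁿ`
whose first `r` coordinates are not all zero with `(JH)·v = (x₁,…,x_r,0,…,0)ᵀ`. -/
theorem exists_constant_vector_of_C_ne_zero {K : Type*} [Field K] (hchar : (2 : K) ≠ 0)
    {m n r : ℕ} [NeZero n] (hrn : r ≤ n)
    (H : Fin m → MvPolynomial (Fin n) K) (hH : ∀ i, (H i).IsHomogeneous 2)
    (hrank : (((jacobian H).map (algebraMap (MvPolynomial (Fin n) K)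
      (FractionRing (MvPolynomial (Fin n) K)))).rank) = r)
    (L : Fin n → MvPolynomial (Fin n) K) (Mc : Fin n → Matrix (Fin m) (Fin n) K)
    (hL : ∀ i, (L i).IsHomogeneous 1) (hind : LinearIndependent K L)
    (hdec : jacobian H = ∑ i, L i • (Mc i).map (C : K →+* MvPolynomial (Fin n) K))
    (hM1 : ∀ (a : Fin m) (b : Fin n),
      Mc 0 a b = if (a : ℕ) = (b : ℕ) ∧ (a : ℕ) < r then 1 else 0)
    (hC : ∃ (i : Fin m) (j : Fin n), r ≤ (i : ℕ) ∧ (j : ℕ) < r ∧ jacobian H i j ≠ 0) :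
    ∃ v : Fin n → K,
      (∃ j : Fin n, (j : ℕ) < r ∧ v j ≠ 0) ∧
      (jacobian H).mulVec (fun j => MvPolynomial.C (v j)) =
        fun i : Fin m =>
          if h : (i : ℕ) < r then X (⟨(i : ℕ), lt_of_lt_of_le h hrn⟩ : Fin n) else 0 := by
  classical
  have hJac : ∀ i j, jacobian H i j = ∑ l, L l * C (Mc l i j) := by
    intro i j
    rw [hdec]
    simp [Matrix.sum_apply, Matrix.smul_apply, smul_eq_mul, Matrix.map_apply]
  set a : Fin n → Fin n → K := fun l j => coeff (Finsupp.single j 1) (L l) with ha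
  have hLd : ∀ l j, pderiv j (L l) = C (a l j) := fun l j =>
    JacAux.pderiv_isHomogeneous_one (hL l) j
  have hLdecomp : ∀ l, L l = ∑ j, C (a l j) * X j := by
    intro l
    have he := JacAux.my_euler (hL l)
    rw [Nat.cast_one, one_mul] at he
    rw [← he]
    exact Finset.sum_congr rfl fun j _ => by rw [hLd, mul_comm]
  -- invertibility of the coefficient matrix
  set Amat : Matrix (Fin n) (Fin n) K := Matrix.of a with hAmat
  have hAunit : IsUnit Amat := by
    rw [← Matrix.linearIndependent_rows_iff_isUnit]
    rw [Fintype.linearIndependent_iff]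
    intro c hc l
    have hrows : ∀ j, ∑ l', c l' * a l' j = 0 := by
      intro j
      have := congrFun hc j
      simpa [Matrix.sum_apply, Amat] using this
    have hLzero : ∑ l', c l' • L l' = 0 := by
      have : ∑ l', c l' • L l' = ∑ j, C (∑ l', c l' * a l' j) * X j := by
        rw [Finset.sum_congr rfl fun l' (_ : l' ∈ Finset.univ) => by
          rw [hLdecomp l', Finset.smul_sum]]
        rw [Finset.sum_comm]
        refine Finset.sum_congr rfl fun j _ => ?_
        rw [map_sum, Finset.sum_mul]
        refine Finset.sum_congr rfl fun l' _ => ?_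
        rw [smul_eq_C_mul, map_mul, mul_assoc]
      rw [this]
      simp only [hrows, map_zero, zero_mul, Finset.sum_const_zero]
    exact Fintype.linearIndependent_iff.mp hind c hLzero l
  have hAdet : IsUnit Amat.det := (Matrix.isUnit_iff_isUnit_det Amat).mp hAunit
  set v : Fin n → K := Amat⁻¹.mulVec (Pi.single 0 1) with hv
  have hAv : ∀ l, ∑ j, a l j * v j = if l = 0 then 1 else 0 := by
    intro l
    have h1 : Amat.mulVec v = Pi.single 0 1 := by
      rw [hv, Matrix.mulVec_mulVec, Matrix.mul_nonsing_inv _ hAdet, Matrix.one_mulVec]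
    have := congrFun h1 l
    simpa [Matrix.mulVec, dotProduct, Pi.single_apply, Amat] using this
  -- symmetry of second partial derivatives
  have hsym : ∀ (i : Fin m) (j k : Fin n),
      ∑ l, a l k * Mc l i j = ∑ l, a l j * Mc l i k := by
    intro i j k
    have hdd : ∀ (j' k' : Fin n), pderiv k' (pderiv j' (H i)) = C (∑ l, a l k' * Mc l i j') := by
      intro j' k'
      rw [show pderiv j' (H i) = jacobian H i j' from rfl, hJac, map_sum, map_sum]
      refine Finset.sum_congr rfl fun l _ => ?_
      rw [pderiv_mul, pderiv_C, mul_zero, add_zero, hLd, ← map_mul]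
    have := JacAux.my_pderiv_comm k j (H i)
    rw [hdd j k, hdd k j] at this
    exact MvPolynomial.C_injective _ _ this
  -- the main identity
  have hmain : ∀ i : Fin m, ∑ j, jacobian H i j * C (v j) =
      if h : (i : ℕ) < r then X (⟨(i : ℕ), lt_of_lt_of_le h hrn⟩ : Fin n) else 0 := by
    intro i
    have step1 : ∑ j, jacobian H i j * C (v j) = ∑ k, X k * C (∑ l, (∑ j, a l j * v j) * Mc l i k) := by
      calc ∑ j, jacobian H i j * C (v j)
          = ∑ j, ∑ l, ∑ k, (C (a l k) * X k) * (C (Mc l i j) * C (v j)) := by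
            refine Finset.sum_congr rfl fun j _ => ?_
            rw [hJac, Finset.sum_mul]
            refine Finset.sum_congr rfl fun l _ => ?_
            rw [hLdecomp l, mul_assoc, Finset.sum_mul]
        _ = ∑ j, ∑ k, ∑ l, (C (a l k) * X k) * (C (Mc l i j) * C (v j)) :=
            Finset.sum_congr rfl fun j _ => Finset.sum_comm
        _ = ∑ k, ∑ j, ∑ l, (C (a l k) * X k) * (C (Mc l i j) * C (v j)) :=
            Finset.sum_comm
        _ = ∑ k, X k * C (∑ j, ∑ l, a l k * Mc l i j * v j) := by
            refine Finset.sum_congr rfl fun k _ => ?_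
            rw [map_sum, Finset.mul_sum]
            refine Finset.sum_congr rfl fun j _ => ?_
            rw [map_sum, Finset.mul_sum]
            refine Finset.sum_congr rfl fun l _ => ?_
            rw [map_mul, map_mul]
            ring
        _ = ∑ k, X k * C (∑ l, (∑ j, a l j * v j) * Mc l i k) := by
            refine Finset.sum_congr rfl fun k _ => ?_
            congr 1
            congr 1
            calc ∑ j, ∑ l, a l k * Mc l i j * v j
                = ∑ j, (∑ l, a l j * Mc l i k) * v j := by
                  refine Finset.sum_congr rfl fun j _ => ?_
                  rw [← hsym i j k, Finset.sum_mul]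
              _ = ∑ l, (∑ j, a l j * v j) * Mc l i k := by
                  simp only [Finset.sum_mul]
                  rw [Finset.sum_comm]
                  exact Finset.sum_congr rfl fun l _ =>
                    Finset.sum_congr rfl fun j _ => by ring
    rw [step1]
    have step2 : ∀ k, (∑ l, (∑ j, a l j * v j) * Mc l i k) = Mc 0 i k := by
      intro k
      simp only [hAv]
      rw [Finset.sum_eq_single 0]
      · rw [if_pos rfl, one_mul]
      · intro l _ hl; rw [if_neg hl, zero_mul]
      · simp
    simp only [step2, hM1]
    by_cases h : (i : ℕ) < r
    · rw [dif_pos h]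
      rw [Finset.sum_eq_single (⟨(i : ℕ), lt_of_lt_of_le h hrn⟩ : Fin n)]
      · rw [if_pos ⟨rfl, h⟩, map_one, mul_one]
      · intro k _ hk
        have : ¬((i : ℕ) = (k : ℕ) ∧ (i : ℕ) < r) := by
          rintro ⟨h1, -⟩
          exact hk (Fin.ext h1.symm)
        rw [if_neg this, map_zero, mul_zero]
      · simp
    · rw [dif_neg h]
      refine Finset.sum_eq_zero fun k _ => ?_
      rw [if_neg (fun hc => h hc.2), map_zero, mul_zero]
  have hmulvec : (jacobian H).mulVec (fun j => C (v j)) =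
      fun i : Fin m =>
        if h : (i : ℕ) < r then X (⟨(i : ℕ), lt_of_lt_of_le h hrn⟩ : Fin n) else 0 := by
    funext i
    rw [← hmain i]
    simp [Matrix.mulVec, dotProduct]
  by_cases hex : ∃ j : Fin n, (j : ℕ) < r ∧ v j ≠ 0
  · exact ⟨v, hex, hmulvec⟩
  exfalso
  push_neg at hex
  obtain ⟨i₀, j₀, hi₀, hj₀, hCne⟩ := hC
  have hr1 : 1 ≤ r := by omega
  have hrm : r < m := lt_of_le_of_lt hi₀ i₀.isLt
  -- the substitution x ↦ x + T·v
  set ψ : MvPolynomial (Fin n) K →ₐ[K] Polynomial (MvPolynomial (Fin n) K) :=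
    MvPolynomial.aeval (fun j => Polynomial.C (X j) + Polynomial.C (C (v j)) * Polynomial.X)
    with hψdef
  have hψC : ∀ c : K, ψ (C c) = Polynomial.C (C c) := by
    intro c
    rw [hψdef, MvPolynomial.aeval_C, Polynomial.algebraMap_apply, MvPolynomial.algebraMap_eq]
  have hψX : ∀ j, ψ (X j) = Polynomial.C (X j) + Polynomial.C (C (v j)) * Polynomial.X := by
    intro j
    rw [hψdef, MvPolynomial.aeval_X]
  have hψL : ∀ l, ψ (L l) = Polynomial.C (L l) +
      Polynomial.C (C (if l = 0 then (1:K) else 0)) * Polynomial.X := by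
    intro l
    conv_lhs => rw [hLdecomp l]
    rw [map_sum]
    have hterm : ∀ j : Fin n, ψ (C (a l j) * X j)
        = Polynomial.C (C (a l j) * X j) + Polynomial.C (C (a l j * v j)) * Polynomial.X := by
      intro j
      rw [map_mul, hψC, hψX, mul_add, ← map_mul, ← mul_assoc, ← map_mul, ← map_mul]
    rw [Finset.sum_congr rfl fun j _ => hterm j, Finset.sum_add_distrib, ← map_sum,
      ← hLdecomp l]
    congr 1
    rw [← Finset.sum_mul, ← map_sum]
    congr 2
    rw [← map_sum, hAv l]
  have hψM : ∀ i j, ψ (jacobian H i j) = Polynomial.C (jacobian H i j) +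
      Polynomial.C (C (Mc 0 i j)) * Polynomial.X := by
    intro i j
    conv_lhs => rw [hJac i j]
    rw [map_sum]
    have hterm : ∀ l, ψ (L l * C (Mc l i j)) = Polynomial.C (L l * C (Mc l i j)) +
        Polynomial.C (C ((if l = 0 then (1:K) else 0) * Mc l i j)) * Polynomial.X := by
      intro l
      rw [map_mul, hψL l, hψC, add_mul, mul_right_comm, ← map_mul, ← map_mul, ← map_mul]
    rw [Finset.sum_congr rfl fun l _ => hterm l, Finset.sum_add_distrib, ← map_sum, ← hJac i j]
    congr 1
    rw [← Finset.sum_mul, ← map_sum, ← map_sum]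
    congr 3
    rw [Finset.sum_eq_single (0 : Fin n)]
    · rw [if_pos rfl, one_mul]
    · intro l _ hl; rw [if_neg hl, zero_mul]
    · simp
  -- index maps for the submatrices
  set ρ : Fin (r+1) → Fin m := fun p => if h : (p:ℕ) < r then ⟨p, h.trans hrm⟩ else i₀ with hρ
  set τ : Fin n → Fin (r+1) → Fin n :=
    fun j p => if h : (p:ℕ) < r then ⟨p, lt_of_lt_of_le h hrn⟩ else j with hτ
  have hlastval : ∀ p : Fin (r+1), p ≠ Fin.last r → (p : ℕ) < r := by
    intro p h
    rcases lt_or_eq_of_le (Nat.lt_succ_iff.mp p.isLt) with h' | h'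
    · exact h'
    · exact absurd (Fin.ext (h'.trans (by simp))) h
  have hlastval' : ∀ p : Fin (r+1), (p : ℕ) < r → p ≠ Fin.last r := by
    intro p h hl
    rw [hl] at h
    simp at h
  have hρlast : ρ (Fin.last r) = i₀ := by simp [hρ]
  have hτlast : ∀ j, τ j (Fin.last r) = j := by intro j; simp [hτ]
  -- the minors of the Jacobian vanish
  have hminor : ∀ j : Fin n, ((jacobian H).submatrix ρ (τ j)).det = 0 := by
    intro j
    set F := FractionRing (MvPolynomial (Fin n) K)
    set φ := algebraMap (MvPolynomial (Fin n) K) F with hφ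
    have hinj : Function.Injective φ := IsFractionRing.injective _ _
    set Mφ := (jacobian H).map φ with hMφ
    have hdet0 : (Mφ.submatrix ρ (τ j)).det = 0 := by
      by_contra hne
      have hunit : IsUnit (Mφ.submatrix ρ (τ j)) :=
        (Matrix.isUnit_iff_isUnit_det _).mpr (isUnit_iff_ne_zero.mpr hne)
      have h1 : (Mφ.submatrix ρ (τ j)).rank = r + 1 := by
        rw [Matrix.rank_of_isUnit _ hunit, Fintype.card_fin]
      have e1 : Mφ * (1 : Matrix (Fin n) (Fin n) F).submatrix (Equiv.refl (Fin n)) (τ j)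
          = Mφ.submatrix id (τ j) := by
        rw [Matrix.mul_submatrix_one]
        congr
      have e2 : (1 : Matrix (Fin m) (Fin m) F).submatrix ρ (Equiv.refl (Fin m)) *
          (Mφ.submatrix id (τ j)) = Mφ.submatrix ρ (τ j) := by
        rw [Matrix.one_submatrix_mul, Matrix.submatrix_submatrix]
        congr
      have h2 : (Mφ.submatrix ρ (τ j)).rank ≤ r := by
        calc (Mφ.submatrix ρ (τ j)).rank
            = ((1 : Matrix (Fin m) (Fin m) F).submatrix ρ (Equiv.refl (Fin m)) *
              (Mφ.submatrix id (τ j))).rank := by rw [e2]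
          _ ≤ (Mφ.submatrix id (τ j)).rank := Matrix.rank_mul_le_right _ _
          _ = (Mφ * (1 : Matrix (Fin n) (Fin n) F).submatrix (Equiv.refl (Fin n)) (τ j)).rank := by
              rw [e1]
          _ ≤ Mφ.rank := Matrix.rank_mul_le_left _ _
          _ = r := hrank
      omega
    have hφdet : φ (((jacobian H).submatrix ρ (τ j)).det) = 0 := by
      rw [RingHom.map_det]
      exact hdet0
    exact hinj (by rw [hφdet, map_zero])
  -- identify the substituted submatrix with the DetAux matrix
  have hMc0 : ∀ j : Fin n, r ≤ (j:ℕ) → ∀ p q : Fin (r+1),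
      Mc 0 (ρ p) (τ j q) = if p = q ∧ p ≠ Fin.last r then 1 else 0 := by
    intro j hj p q
    rw [hM1]
    by_cases hp : (p:ℕ) < r
    · by_cases hq : (q:ℕ) < r
      · have h1 : ((ρ p : Fin m) : ℕ) = (p : ℕ) := by simp [hρ, hp]
        have h2 : ((τ j q : Fin n) : ℕ) = (q : ℕ) := by simp [hτ, hq]
        rw [h1, h2]
        by_cases hpq : p = q
        · rw [if_pos ⟨by rw [hpq], hp⟩, if_pos ⟨hpq, hlastval' p hp⟩]
        · rw [if_neg, if_neg]
          · rintro ⟨h, -⟩; exact hpq h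
          · rintro ⟨h, -⟩; exact hpq (Fin.ext h)
      · have h1 : ((ρ p : Fin m) : ℕ) = (p : ℕ) := by simp [hρ, hp]
        have h2 : (τ j q : Fin n) = j := by simp [hτ, hq]
        rw [h1, h2, if_neg (fun hc => by omega),
          if_neg (fun (hc : p = q ∧ p ≠ Fin.last r) => hq (hc.1 ▸ hp))]
    · have h1 : (ρ p : Fin m) = i₀ := by simp [hρ, hp]
      rw [h1, if_neg (fun hc => absurd (hi₀.trans_lt hc.2) (lt_irrefl _)),
        if_neg (fun (hc : p = q ∧ p ≠ Fin.last r) => hp (hlastval p hc.2))]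
  have hQdet : ∀ j : Fin n, r ≤ (j:ℕ) →
      (JacAux.DetAux.Q ((jacobian H).submatrix ρ (τ j))).det = 0 := by
    intro j hj
    have hQeq : ((jacobian H).submatrix ρ (τ j)).map ψ
        = JacAux.DetAux.Q ((jacobian H).submatrix ρ (τ j)) := by
      ext p q
      rw [Matrix.map_apply, Matrix.submatrix_apply, hψM, JacAux.DetAux.Q]
      rw [Matrix.of_apply, Matrix.submatrix_apply, hMc0 j hj p q]
      by_cases hc : p = q ∧ p ≠ Fin.last r
      · rw [if_pos hc, if_pos hc, map_one, map_one, one_mul]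
      · rw [if_neg hc, if_neg hc, map_zero, map_zero, zero_mul, add_zero]
    rw [← hQeq]
    have h := RingHom.map_det ψ.toRingHom ((jacobian H).submatrix ρ (τ j))
    rw [hminor j, map_zero] at h
    exact h.symm
  -- Fact D : the lower-right block of the Jacobian vanishes (row i₀)
  have hD : ∀ j : Fin n, r ≤ (j:ℕ) → jacobian H i₀ j = 0 := by
    intro j hj
    have := JacAux.DetAux.part_a _ hr1 (hQdet j hj)
    rwa [Matrix.submatrix_apply, hρlast, hτlast] at this
  -- Fact CB
  have hCB : ∀ j : Fin n, r ≤ (j:ℕ) →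
      ∑ p ∈ Finset.univ.erase (Fin.last r),
        jacobian H (ρ p) j * jacobian H i₀ (τ j p) = 0 := by
    intro j hj
    have hb := JacAux.DetAux.part_b _ hr1 (hQdet j hj)
    rw [← hb]
    refine Finset.sum_congr rfl fun p _ => ?_
    rw [Matrix.submatrix_apply, Matrix.submatrix_apply, hρlast, hτlast]
  -- embeddings Fin r → Fin m, Fin n
  set en : Fin r → Fin n := fun p => ⟨p, lt_of_lt_of_le p.isLt hrn⟩ with hen
  set em : Fin r → Fin m := fun p => ⟨p, lt_trans p.isLt hrm⟩ with hem
  have hsum_erase : ∀ f : Fin (r+1) → MvPolynomial (Fin n) K,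
      ∑ p ∈ Finset.univ.erase (Fin.last r), f p = ∑ p : Fin r, f p.castSucc := by
    intro f
    have h1 := Fin.sum_univ_castSucc f
    have h2 := Finset.sum_erase_add Finset.univ f (Finset.mem_univ (Fin.last r))
    have := h2.trans h1
    exact add_right_cancel this
  have hρcast : ∀ p : Fin r, ρ p.castSucc = em p := by
    intro p
    simp only [hρ, Fin.coe_castSucc, dif_pos p.isLt, hem]
  have hτcast : ∀ (j : Fin n) (p : Fin r), τ j p.castSucc = en p := by
    intro j p
    simp only [hτ, Fin.coe_castSucc, dif_pos p.isLt, hen]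
  have hCB' : ∀ j : Fin n, r ≤ (j:ℕ) →
      ∑ p : Fin r, jacobian H (em p) j * jacobian H i₀ (en p) = 0 := by
    intro j hj
    have := hCB j hj
    rw [hsum_erase] at this
    rw [← this]
    exact Finset.sum_congr rfl fun p _ => by rw [hρcast, hτcast]
  -- rows < r of the main identity
  have hI : ∀ p : Fin r, ∑ j, jacobian H (em p) j * C (v j) = X (en p) := by
    intro p
    have h := hmain (em p)
    have hlt : ((em p : Fin m) : ℕ) < r := p.isLt
    rw [dif_pos hlt] at h
    convert h using 2
  -- the key cancellation
  have hIV : ∑ p : Fin r, jacobian H i₀ (en p) * X (en p) = 0 := by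
    calc ∑ p : Fin r, jacobian H i₀ (en p) * X (en p)
        = ∑ p : Fin r, jacobian H i₀ (en p) * (∑ j, jacobian H (em p) j * C (v j)) := by
          exact Finset.sum_congr rfl fun p _ => by rw [hI p]
      _ = ∑ j, ∑ p : Fin r, (jacobian H (em p) j * jacobian H i₀ (en p)) * C (v j) := by
          simp only [Finset.mul_sum]
          rw [Finset.sum_comm]
          exact Finset.sum_congr rfl fun j _ => Finset.sum_congr rfl fun p _ => by ring
      _ = 0 := by
          refine Finset.sum_eq_zero fun j _ => ?_
          by_cases hj : (j:ℕ) < r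
          · rw [Finset.sum_eq_zero]
            intro p _
            rw [hex j hj, map_zero, mul_zero]
          · rw [← Finset.sum_mul, hCB' j (le_of_not_gt hj), zero_mul]
  -- Euler's identity kills H i₀
  have hEuler := JacAux.my_euler (hH i₀)
  have hsplit : ∑ j : Fin n, X j * jacobian H i₀ j = 0 := by
    rw [← Finset.sum_filter_add_sum_filter_not Finset.univ (fun j : Fin n => (j:ℕ) < r)]
    have hz2 : ∑ j ∈ Finset.univ.filter (fun j : Fin n => ¬((j:ℕ) < r)),
        X j * jacobian H i₀ j = 0 := by
      refine Finset.sum_eq_zero fun j hj => ?_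
      rw [hD j (le_of_not_gt (Finset.mem_filter.mp hj).2), mul_zero]
    have himg : Finset.univ.image en = Finset.univ.filter (fun j : Fin n => (j:ℕ) < r) := by
      ext j
      simp only [Finset.mem_image, Finset.mem_filter, Finset.mem_univ, true_and]
      constructor
      · rintro ⟨p, -, rfl⟩
        exact p.isLt
      · intro hj
        exact ⟨⟨(j:ℕ), hj⟩, Fin.ext rfl⟩
    have hz1 : ∑ j ∈ Finset.univ.filter (fun j : Fin n => (j:ℕ) < r),
        X j * jacobian H i₀ j = 0 := by
      rw [← himg, Finset.sum_image (fun p _ q _ h => by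
        have := congrArg (fun x : Fin n => (x:ℕ)) h
        exact Fin.ext this)]
      rw [← hIV]
      exact Finset.sum_congr rfl fun p _ => mul_comm _ _
    rw [hz1, hz2, add_zero]
  have h2H : ((2:ℕ) : MvPolynomial (Fin n) K) * H i₀ = 0 := by
    rw [← hEuler]
    exact hsplit
  have h2ne : ((2:ℕ) : MvPolynomial (Fin n) K) ≠ 0 := by
    intro h
    apply hchar
    have : ((2:ℕ) : MvPolynomial (Fin n) K) = C ((2:ℕ) : K) := by
      rw [map_natCast (C : K →+* MvPolynomial (Fin n) K)]
    rw [this] at h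
    have := MvPolynomial.C_injective (Fin n) K (h.trans (map_zero _).symm)
    rwa [Nat.cast_ofNat] at this
  have hH0 : H i₀ = 0 := by
    rcases mul_eq_zero.mp h2H with h | h
    · exact absurd h h2ne
    · exact h
  apply hCne
  rw [show jacobian H i₀ j₀ = pderiv j₀ (H i₀) from rfl, hH0, map_zero]
end

section
/- Let K be a field with char K ≠ 2, let c ∈ K be nonzero, and let H = (x₁x₃ + c·x₂x₄, x₂x₃ − x₁x₄, ½x₃² + (c/2)x₄², ½x₁² + (c/2)x₂²). Then rk JH = 3, i.e., det JH = 0 but JH has a nonzero 3×3 minor. -/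
open MvPolynomial

/-- The map `H = (x₁x₃ + c x₂x₄, x₂x₃ − x₁x₄, ½x₃² + (c/2)x₄², ½x₁² + (c/2)x₂²)`. -/
noncomputable def Hmap {K : Type*} [Field K] (c : K) : Fin 4 → MvPolynomial (Fin 4) K :=
  ![X 0 * X 2 + C c * (X 1 * X 3),
    X 1 * X 2 - X 0 * X 3,
    C (2 : K)⁻¹ * X 2 ^ 2 + C (c / 2) * X 3 ^ 2,
    C (2 : K)⁻¹ * X 0 ^ 2 + C (c / 2) * X 1 ^ 2]

set_option maxHeartbeats 2000000 in
/-- Explicit form of the Jacobian matrix of `Hmap c`. -/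
lemma jac_eq {K : Type*} [Field K] (hchar : (2 : K) ≠ 0) (c : K) :
    jacobian (Hmap c) =
    !![X 2, C c * X 3, X 0, C c * X 1;
       -X 3, X 2, X 1, -X 0;
       0, 0, X 2, C c * X 3;
       X 0, C c * X 1, 0, 0] := by
  have h2 : (C (2:K)⁻¹ : MvPolynomial (Fin 4) K) * 2 = 1 := by
    rw [show (2 : MvPolynomial (Fin 4) K) = C 2 from (map_ofNat C 2).symm, ← C_mul,
      inv_mul_cancel₀ hchar, C_1]
  have hc2 : (C (c / 2) : MvPolynomial (Fin 4) K) * 2 = C c := by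
    rw [show (2 : MvPolynomial (Fin 4) K) = C 2 from (map_ofNat C 2).symm, ← C_mul,
      div_mul_cancel₀ c hchar]
  have h2' : (2 : MvPolynomial (Fin 4) K) * C (2:K)⁻¹ = 1 := by rw [mul_comm]; exact h2
  have hc2' : (2 : MvPolynomial (Fin 4) K) * C (c / 2) = C c := by rw [mul_comm]; exact hc2
  ext i j
  fin_cases i <;> fin_cases j <;>
    simp (config := { decide := true }) [jacobian, Hmap, Derivation.leibniz, pderiv_X,
      Pi.single_apply, smul_eq_mul, Fin.ext_iff, h2, hc2, h2', hc2', mul_assoc,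
      mul_left_comm, mul_comm]

/-- Expansion of a `4 × 4` determinant. -/
lemma det_fin_four' {R : Type*} [CommRing R] (A : Matrix (Fin 4) (Fin 4) R) :
    A.det =
      A 0 0 * (A 1 1 * (A 2 2 * A 3 3 - A 2 3 * A 3 2) - A 1 2 * (A 2 1 * A 3 3 - A 2 3 * A 3 1)
        + A 1 3 * (A 2 1 * A 3 2 - A 2 2 * A 3 1))
      - A 0 1 * (A 1 0 * (A 2 2 * A 3 3 - A 2 3 * A 3 2) - A 1 2 * (A 2 0 * A 3 3 - A 2 3 * A 3 0)
        + A 1 3 * (A 2 0 * A 3 2 - A 2 2 * A 3 0))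
      + A 0 2 * (A 1 0 * (A 2 1 * A 3 3 - A 2 3 * A 3 1) - A 1 1 * (A 2 0 * A 3 3 - A 2 3 * A 3 0)
        + A 1 3 * (A 2 0 * A 3 1 - A 2 1 * A 3 0))
      - A 0 3 * (A 1 0 * (A 2 1 * A 3 2 - A 2 2 * A 3 1) - A 1 1 * (A 2 0 * A 3 2 - A 2 2 * A 3 0)
        + A 1 2 * (A 2 0 * A 3 1 - A 2 1 * A 3 0)) := by
  rw [Matrix.det_succ_row_zero]
  simp [Fin.sum_univ_succ, Matrix.det_fin_three, Fin.succAbove,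
    show (Fin.succ 2 : Fin 4) = 3 from rfl, show ((2 : Fin 3).castSucc : Fin 4) = 2 from rfl]
  ring

/-- `rk JH = 3`: `det JH = 0` but `JH` has a nonzero `3 × 3` minor. -/
theorem Hmap_rank_eq_three {K : Type*} [Field K] (hchar : (2 : K) ≠ 0)
    (c : K) (hc : c ≠ 0) :
    (jacobian (Hmap c)).det = 0 ∧
    ∃ i j : Fin 4,
      ((jacobian (Hmap c)).submatrix i.succAbove j.succAbove).det ≠ 0 := by
  constructor
  · rw [jac_eq hchar c, det_fin_four']
    simp
    ring
  · refine ⟨0, 0, ?_⟩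
    rw [jac_eq hchar c]
    have hdet : ((!![X 2, C c * X 3, X 0, C c * X 1;
         -X 3, X 2, X 1, -X 0;
         0, 0, X 2, C c * X 3;
         X 0, C c * X 1, 0, 0] : Matrix _ _ (MvPolynomial (Fin 4) K)).submatrix
        (0:Fin 4).succAbove (0:Fin 4).succAbove).det =
        C c * X 1 * (C c * X 1 * X 3 + X 0 * X 2) := by
      rw [Matrix.det_fin_three]
      simp [Fin.succAbove, Fin.lt_def]
      ring
    rw [hdet]
    intro h
    have hev := congrArg (eval ![0, 1, 0, 1]) h
    simp at hev
    exact hc hev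
end

section
/- Let K be a field of characteristic 2, n ≥ 6, a, b ∈ K, and u₂ ∈ K[x₄, x₇, x₈, ..., xₙ]. Define F = (x₁ + x₂x₆, x₂ + x₁x₅ − x₃x₆ + a x₄x₅ − b x₄x₆ + u₂, x₃ + x₂x₅, x₄ + x₅x₆, x₅, ..., xₙ). Then F equals the composition E_{4, x₅x₆} ∘ E_{2, x₁x₅−x₃x₆+ax₄x₅−bx₄x₆+u₂} ∘ E_{1, x₂x₆} ∘ E_{3, x₂x₅} of elementary automorphisms; in particular F is a tame automorphism. -/
open MvPolynomial

/-- Composition of polynomial maps: `(F ∘ G)ᵢ = Fᵢ(G)`. -/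
noncomputable def pcomp {K : Type*} [Field K] {n : ℕ}
    (F G : Fin n → MvPolynomial (Fin n) K) : Fin n → MvPolynomial (Fin n) K :=
  fun i => aeval G (F i)

/-- The elementary polynomial map `E_{i,a}` adding `a` to the `i`-th coordinate. -/
noncomputable def elem {K : Type*} [Field K] {n : ℕ} (i : Fin n)
    (a : MvPolynomial (Fin n) K) : Fin n → MvPolynomial (Fin n) K :=
  fun j => if j = i then X j + a else X j

section helpers
variable {K : Type*} [Field K] {n : ℕ}

lemma pcomp_assoc (F G H : Fin n → MvPolynomial (Fin n) K) :
    pcomp (pcomp F G) H = pcomp F (pcomp G H) := by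
  funext i
  simp only [pcomp]
  induction (F i) using MvPolynomial.induction_on with
  | C c => simp
  | add p q hp hq => simp only [map_add, hp, hq]
  | mul_X p j hp => simp only [map_mul, aeval_X, hp]; rfl

lemma pcomp_X_left (F : Fin n → MvPolynomial (Fin n) K) : pcomp X F = F := by
  funext i; simp [pcomp]

lemma pcomp_X_right (F : Fin n → MvPolynomial (Fin n) K) : pcomp F X = F := by
  funext i; simp [pcomp]

lemma elem_same (i : Fin n) (a : MvPolynomial (Fin n) K) : elem i a i = X i + a := by
  simp [elem]

lemma elem_ne {i j : Fin n} (h : j ≠ i) (a : MvPolynomial (Fin n) K) : elem i a j = X j := by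
  simp [elem, h]

lemma pcomp_elem_cancel (i : Fin n) (a b : MvPolynomial (Fin n) K)
    (h : aeval (elem i b) a = -b) : pcomp (elem i a) (elem i b) = (X : Fin n → MvPolynomial (Fin n) K) := by
  funext j
  simp only [pcomp]
  by_cases hj : j = i
  · subst hj
    rw [elem_same, map_add, aeval_X, elem_same, h]; ring
  · rw [elem_ne hj, aeval_X, elem_ne hj]

lemma aeval_fix {s : Set (Fin n)} {G : Fin n → MvPolynomial (Fin n) K}
    (hG : ∀ j ∈ s, G j = X j) {p : MvPolynomial (Fin n) K}
    (hp : p ∈ MvPolynomial.supported K s) : aeval G p = p := by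
  have hp' : p ∈ Algebra.adjoin K (MvPolynomial.X '' s : Set (MvPolynomial (Fin n) K)) := hp
  clear hp
  induction hp' using Algebra.adjoin_induction with
  | mem x hx => obtain ⟨j, hj, rfl⟩ := hx; simp [hG j hj]
  | algebraMap r => simp
  | add _ _ _ _ h1 h2 => simp only [map_add, h1, h2]
  | mul _ _ _ _ h1 h2 => simp only [map_mul, h1, h2]

end helpers

section helpers2
variable {K : Type*} [Field K] {n : ℕ}

lemma pcomp_inv_pair {F G F' G' : Fin n → MvPolynomial (Fin n) K}
    (h : pcomp F G = X) (h' : pcomp F' G' = X) :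
    pcomp (pcomp F F') (pcomp G' G) = (X : Fin n → MvPolynomial (Fin n) K) := by
  rw [pcomp_assoc, ← pcomp_assoc F' G' G, h', pcomp_X_left, h]

lemma inv_of_pcomp {F G : Fin n → MvPolynomial (Fin n) K}
    (h : pcomp F G = X) : ∀ i, aeval G (F i) = X i :=
  fun i => congrFun h i

end helpers2

/-- In characteristic 2, the map
`F = (x₁ + x₂x₆, x₂ + x₁x₅ − x₃x₆ + ax₄x₅ − bx₄x₆ + u₂, x₃ + x₂x₅, x₄ + x₅x₆, x₅, …, xₙ)`
equals `E_{4,x₅x₆} ∘ E_{2,x₁x₅−x₃x₆+ax₄x₅−bx₄x₆+u₂} ∘ E_{1,x₂x₆} ∘ E_{3,x₂x₅}`;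
in particular it is a (tame) automorphism. -/
theorem tame_factorization_case3 {K : Type*} [Field K] [CharP K 2]
    {n : ℕ} (hn : 6 ≤ n) (a b : K) (u₂ : MvPolynomial (Fin n) K)
    (hu₂ : u₂ ∈ MvPolynomial.supported K {j : Fin n | (j : ℕ) = 3 ∨ 6 ≤ (j : ℕ)})
    (F : Fin n → MvPolynomial (Fin n) K)
    (hF : F = fun i : Fin n =>
      X i + (if i = (⟨0, by omega⟩ : Fin n) then
          X (⟨1, by omega⟩ : Fin n) * X (⟨5, by omega⟩ : Fin n)
        else if i = (⟨1, by omega⟩ : Fin n) then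
          X (⟨0, by omega⟩ : Fin n) * X (⟨4, by omega⟩ : Fin n)
            - X (⟨2, by omega⟩ : Fin n) * X (⟨5, by omega⟩ : Fin n)
            + C a * (X (⟨3, by omega⟩ : Fin n) * X (⟨4, by omega⟩ : Fin n))
            - C b * (X (⟨3, by omega⟩ : Fin n) * X (⟨5, by omega⟩ : Fin n)) + u₂
        else if i = (⟨2, by omega⟩ : Fin n) then
          X (⟨1, by omega⟩ : Fin n) * X (⟨4, by omega⟩ : Fin n)
        else if i = (⟨3, by omega⟩ : Fin n) then
          X (⟨4, by omega⟩ : Fin n) * X (⟨5, by omega⟩ : Fin n)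
        else 0)) :
    F = pcomp (elem (⟨3, by omega⟩ : Fin n)
          (X (⟨4, by omega⟩ : Fin n) * X (⟨5, by omega⟩ : Fin n)))
          (pcomp (elem (⟨1, by omega⟩ : Fin n)
              (X (⟨0, by omega⟩ : Fin n) * X (⟨4, by omega⟩ : Fin n)
                - X (⟨2, by omega⟩ : Fin n) * X (⟨5, by omega⟩ : Fin n)
                + C a * (X (⟨3, by omega⟩ : Fin n) * X (⟨4, by omega⟩ : Fin n))
                - C b * (X (⟨3, by omega⟩ : Fin n) * X (⟨5, by omega⟩ : Fin n)) + u₂))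
            (pcomp (elem (⟨0, by omega⟩ : Fin n)
                (X (⟨1, by omega⟩ : Fin n) * X (⟨5, by omega⟩ : Fin n)))
              (elem (⟨2, by omega⟩ : Fin n)
                (X (⟨1, by omega⟩ : Fin n) * X (⟨4, by omega⟩ : Fin n))))) ∧
    ∃ G : Fin n → MvPolynomial (Fin n) K,
      (∀ i, aeval G (F i) = X i) ∧ (∀ i, aeval F (G i) = X i) := by
  -- fixed-variable fact for u₂
  have hufix : ∀ (G : Fin n → MvPolynomial (Fin n) K),
      (∀ j : Fin n, ((j : ℕ) = 3 ∨ 6 ≤ (j : ℕ)) → G j = X j) → aeval G u₂ = u₂ :=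
    fun G hG => aeval_fix (s := {j : Fin n | (j : ℕ) = 3 ∨ 6 ≤ (j : ℕ)}) (fun j hj => hG j hj) hu₂
  -- the inner composition E_{1,x₂x₆} ∘ E_{3,x₂x₅}
  have h_inner : ∀ j : Fin n,
      pcomp (elem (⟨0, by omega⟩ : Fin n)
          (X (⟨1, by omega⟩ : Fin n) * X (⟨5, by omega⟩ : Fin n)))
        (elem (⟨2, by omega⟩ : Fin n)
          (X (⟨1, by omega⟩ : Fin n) * X (⟨4, by omega⟩ : Fin n))) j =
      if j = (⟨0, by omega⟩ : Fin n) then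
        X (⟨0, by omega⟩ : Fin n) + X (⟨1, by omega⟩ : Fin n) * X (⟨5, by omega⟩ : Fin n)
      else if j = (⟨2, by omega⟩ : Fin n) then
        X (⟨2, by omega⟩ : Fin n) + X (⟨1, by omega⟩ : Fin n) * X (⟨4, by omega⟩ : Fin n)
      else (X j : MvPolynomial (Fin n) K) := by
    intro j
    by_cases hj0 : j = (⟨0, by omega⟩ : Fin n)
    · subst hj0; simp [pcomp, elem, Fin.mk.injEq]
    · by_cases hj2 : j = (⟨2, by omega⟩ : Fin n)
      · subst hj2; simp [pcomp, elem, Fin.mk.injEq]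
      · simp [pcomp, elem, hj0, hj2]
  have ne_mk : ∀ {j : Fin n} {k : ℕ} (hk : k < n), (j : ℕ) ≠ k → j ≠ ⟨k, hk⟩ :=
    fun hk h e => h (by rw [e])
  have mk_ne : ∀ {k l : ℕ} (hk : k < n) (hl : l < n), k ≠ l → (⟨k, hk⟩ : Fin n) ≠ ⟨l, hl⟩ :=
    fun hk hl h e => h (by injection e)
  -- the inner composition fixes A
  have hA_inner : aeval
      (pcomp (elem (⟨0, by omega⟩ : Fin n)
          (X (⟨1, by omega⟩ : Fin n) * X (⟨5, by omega⟩ : Fin n)))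
        (elem (⟨2, by omega⟩ : Fin n)
          (X (⟨1, by omega⟩ : Fin n) * X (⟨4, by omega⟩ : Fin n))))
      (X (⟨0, by omega⟩ : Fin n) * X (⟨4, by omega⟩ : Fin n)
        - X (⟨2, by omega⟩ : Fin n) * X (⟨5, by omega⟩ : Fin n)
        + C a * (X (⟨3, by omega⟩ : Fin n) * X (⟨4, by omega⟩ : Fin n))
        - C b * (X (⟨3, by omega⟩ : Fin n) * X (⟨5, by omega⟩ : Fin n)) + u₂) =
      X (⟨0, by omega⟩ : Fin n) * X (⟨4, by omega⟩ : Fin n)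
        - X (⟨2, by omega⟩ : Fin n) * X (⟨5, by omega⟩ : Fin n)
        + C a * (X (⟨3, by omega⟩ : Fin n) * X (⟨4, by omega⟩ : Fin n))
        - C b * (X (⟨3, by omega⟩ : Fin n) * X (⟨5, by omega⟩ : Fin n)) + u₂ := by
    have hu : aeval
        (pcomp (elem (⟨0, by omega⟩ : Fin n)
            (X (⟨1, by omega⟩ : Fin n) * X (⟨5, by omega⟩ : Fin n)))
          (elem (⟨2, by omega⟩ : Fin n)
            (X (⟨1, by omega⟩ : Fin n) * X (⟨4, by omega⟩ : Fin n)))) u₂ = u₂ := by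
      refine hufix _ (fun j hj => ?_)
      rw [h_inner, if_neg (ne_mk _ (by omega)), if_neg (ne_mk _ (by omega))]
    simp only [map_add, map_sub, map_mul, aeval_C, aeval_X, hu, h_inner]
    norm_num [Fin.mk.injEq]
    ring
  -- the middle composition
  have hM : ∀ j : Fin n,
      pcomp (elem (⟨1, by omega⟩ : Fin n)
          (X (⟨0, by omega⟩ : Fin n) * X (⟨4, by omega⟩ : Fin n)
            - X (⟨2, by omega⟩ : Fin n) * X (⟨5, by omega⟩ : Fin n)
            + C a * (X (⟨3, by omega⟩ : Fin n) * X (⟨4, by omega⟩ : Fin n))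
            - C b * (X (⟨3, by omega⟩ : Fin n) * X (⟨5, by omega⟩ : Fin n)) + u₂))
        (pcomp (elem (⟨0, by omega⟩ : Fin n)
            (X (⟨1, by omega⟩ : Fin n) * X (⟨5, by omega⟩ : Fin n)))
          (elem (⟨2, by omega⟩ : Fin n)
            (X (⟨1, by omega⟩ : Fin n) * X (⟨4, by omega⟩ : Fin n)))) j =
      if j = (⟨1, by omega⟩ : Fin n) then
        X (⟨1, by omega⟩ : Fin n)
          + (X (⟨0, by omega⟩ : Fin n) * X (⟨4, by omega⟩ : Fin n)
            - X (⟨2, by omega⟩ : Fin n) * X (⟨5, by omega⟩ : Fin n)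
            + C a * (X (⟨3, by omega⟩ : Fin n) * X (⟨4, by omega⟩ : Fin n))
            - C b * (X (⟨3, by omega⟩ : Fin n) * X (⟨5, by omega⟩ : Fin n)) + u₂)
      else if j = (⟨0, by omega⟩ : Fin n) then
        X (⟨0, by omega⟩ : Fin n) + X (⟨1, by omega⟩ : Fin n) * X (⟨5, by omega⟩ : Fin n)
      else if j = (⟨2, by omega⟩ : Fin n) then
        X (⟨2, by omega⟩ : Fin n) + X (⟨1, by omega⟩ : Fin n) * X (⟨4, by omega⟩ : Fin n)
      else (X j : MvPolynomial (Fin n) K) := by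
    intro j
    by_cases hj1 : j = (⟨1, by omega⟩ : Fin n)
    · subst hj1
      rw [if_pos rfl]
      show aeval _ (elem _ _ _) = _
      rw [elem_same, map_add, aeval_X, hA_inner, h_inner,
        if_neg (mk_ne _ _ (by omega)), if_neg (mk_ne _ _ (by omega))]
    · rw [if_neg hj1]
      show aeval _ (elem _ _ _) = _
      rw [elem_ne hj1, aeval_X, h_inner]
  -- the factorization
  have key : F = pcomp (elem (⟨3, by omega⟩ : Fin n)
          (X (⟨4, by omega⟩ : Fin n) * X (⟨5, by omega⟩ : Fin n)))
          (pcomp (elem (⟨1, by omega⟩ : Fin n)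
              (X (⟨0, by omega⟩ : Fin n) * X (⟨4, by omega⟩ : Fin n)
                - X (⟨2, by omega⟩ : Fin n) * X (⟨5, by omega⟩ : Fin n)
                + C a * (X (⟨3, by omega⟩ : Fin n) * X (⟨4, by omega⟩ : Fin n))
                - C b * (X (⟨3, by omega⟩ : Fin n) * X (⟨5, by omega⟩ : Fin n)) + u₂))
            (pcomp (elem (⟨0, by omega⟩ : Fin n)
                (X (⟨1, by omega⟩ : Fin n) * X (⟨5, by omega⟩ : Fin n)))
              (elem (⟨2, by omega⟩ : Fin n)
                (X (⟨1, by omega⟩ : Fin n) * X (⟨4, by omega⟩ : Fin n))))) := by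
    subst hF
    funext i
    by_cases hi3 : i = (⟨3, by omega⟩ : Fin n)
    · subst hi3
      show _ = aeval _ (elem _ _ _)
      rw [elem_same, map_add, aeval_X, map_mul, aeval_X, aeval_X, hM, hM, hM]
      norm_num [Fin.mk.injEq]
    · show _ = aeval _ (elem _ _ _)
      rw [elem_ne hi3, aeval_X, hM]
      by_cases hi1 : i = (⟨1, by omega⟩ : Fin n)
      · subst hi1; norm_num [Fin.mk.injEq]
      · rw [if_neg hi1]
        by_cases hi0 : i = (⟨0, by omega⟩ : Fin n)
        · subst hi0; norm_num [Fin.mk.injEq]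
        · by_cases hi2 : i = (⟨2, by omega⟩ : Fin n)
          · subst hi2; norm_num [Fin.mk.injEq]
          · simp [hi0, hi1, hi2, hi3]
  -- cancellation facts
  have helem : ∀ (m k : ℕ) (hm : m < n) (hk : k < n) (c : MvPolynomial (Fin n) K),
      k ≠ m → elem (⟨m, hm⟩ : Fin n) c ⟨k, hk⟩ = X ⟨k, hk⟩ :=
    fun m k hm hk c h => elem_ne (mk_ne _ _ h) c
  have cu : ∀ c : MvPolynomial (Fin n) K,
      aeval (elem (⟨1, by omega⟩ : Fin n) c) u₂ = u₂ :=
    fun c => hufix _ (fun j hj => elem_ne (ne_mk _ (by omega)) c)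
  have c3 : pcomp (elem (⟨3, by omega⟩ : Fin n)
        (X (⟨4, by omega⟩ : Fin n) * X (⟨5, by omega⟩ : Fin n)))
      (elem (⟨3, by omega⟩ : Fin n)
        (-(X (⟨4, by omega⟩ : Fin n) * X (⟨5, by omega⟩ : Fin n)))) = (X : Fin n → MvPolynomial (Fin n) K) :=
    by apply pcomp_elem_cancel; simp [elem, Fin.mk.injEq]
  have c3' : pcomp (elem (⟨3, by omega⟩ : Fin n)
        (-(X (⟨4, by omega⟩ : Fin n) * X (⟨5, by omega⟩ : Fin n))))
      (elem (⟨3, by omega⟩ : Fin n)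
        (X (⟨4, by omega⟩ : Fin n) * X (⟨5, by omega⟩ : Fin n))) = (X : Fin n → MvPolynomial (Fin n) K) :=
    by apply pcomp_elem_cancel; simp [elem, Fin.mk.injEq]
  have c0 : pcomp (elem (⟨0, by omega⟩ : Fin n)
        (X (⟨1, by omega⟩ : Fin n) * X (⟨5, by omega⟩ : Fin n)))
      (elem (⟨0, by omega⟩ : Fin n)
        (-(X (⟨1, by omega⟩ : Fin n) * X (⟨5, by omega⟩ : Fin n)))) = (X : Fin n → MvPolynomial (Fin n) K) :=
    by apply pcomp_elem_cancel; simp [elem, Fin.mk.injEq]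
  have c0' : pcomp (elem (⟨0, by omega⟩ : Fin n)
        (-(X (⟨1, by omega⟩ : Fin n) * X (⟨5, by omega⟩ : Fin n))))
      (elem (⟨0, by omega⟩ : Fin n)
        (X (⟨1, by omega⟩ : Fin n) * X (⟨5, by omega⟩ : Fin n))) = (X : Fin n → MvPolynomial (Fin n) K) :=
    by apply pcomp_elem_cancel; simp [elem, Fin.mk.injEq]
  have c2 : pcomp (elem (⟨2, by omega⟩ : Fin n)
        (X (⟨1, by omega⟩ : Fin n) * X (⟨4, by omega⟩ : Fin n)))
      (elem (⟨2, by omega⟩ : Fin n)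
        (-(X (⟨1, by omega⟩ : Fin n) * X (⟨4, by omega⟩ : Fin n)))) = (X : Fin n → MvPolynomial (Fin n) K) :=
    by apply pcomp_elem_cancel; simp [elem, Fin.mk.injEq]
  have c2' : pcomp (elem (⟨2, by omega⟩ : Fin n)
        (-(X (⟨1, by omega⟩ : Fin n) * X (⟨4, by omega⟩ : Fin n))))
      (elem (⟨2, by omega⟩ : Fin n)
        (X (⟨1, by omega⟩ : Fin n) * X (⟨4, by omega⟩ : Fin n))) = (X : Fin n → MvPolynomial (Fin n) K) :=
    by apply pcomp_elem_cancel; simp [elem, Fin.mk.injEq]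
  have c1 : pcomp (elem (⟨1, by omega⟩ : Fin n)
        (X (⟨0, by omega⟩ : Fin n) * X (⟨4, by omega⟩ : Fin n)
          - X (⟨2, by omega⟩ : Fin n) * X (⟨5, by omega⟩ : Fin n)
          + C a * (X (⟨3, by omega⟩ : Fin n) * X (⟨4, by omega⟩ : Fin n))
          - C b * (X (⟨3, by omega⟩ : Fin n) * X (⟨5, by omega⟩ : Fin n)) + u₂))
      (elem (⟨1, by omega⟩ : Fin n)
        (-(X (⟨0, by omega⟩ : Fin n) * X (⟨4, by omega⟩ : Fin n)
          - X (⟨2, by omega⟩ : Fin n) * X (⟨5, by omega⟩ : Fin n)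
          + C a * (X (⟨3, by omega⟩ : Fin n) * X (⟨4, by omega⟩ : Fin n))
          - C b * (X (⟨3, by omega⟩ : Fin n) * X (⟨5, by omega⟩ : Fin n)) + u₂))) = (X : Fin n → MvPolynomial (Fin n) K) :=
    by
      apply pcomp_elem_cancel
      rw [neg_neg, map_add, cu]
      simp only [map_add, map_sub, map_mul, aeval_C, aeval_X, algebraMap_eq]
      simp [elem, Fin.mk.injEq]
  have c1' : pcomp (elem (⟨1, by omega⟩ : Fin n)
        (-(X (⟨0, by omega⟩ : Fin n) * X (⟨4, by omega⟩ : Fin n)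
          - X (⟨2, by omega⟩ : Fin n) * X (⟨5, by omega⟩ : Fin n)
          + C a * (X (⟨3, by omega⟩ : Fin n) * X (⟨4, by omega⟩ : Fin n))
          - C b * (X (⟨3, by omega⟩ : Fin n) * X (⟨5, by omega⟩ : Fin n)) + u₂)))
      (elem (⟨1, by omega⟩ : Fin n)
        (X (⟨0, by omega⟩ : Fin n) * X (⟨4, by omega⟩ : Fin n)
          - X (⟨2, by omega⟩ : Fin n) * X (⟨5, by omega⟩ : Fin n)
          + C a * (X (⟨3, by omega⟩ : Fin n) * X (⟨4, by omega⟩ : Fin n))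
          - C b * (X (⟨3, by omega⟩ : Fin n) * X (⟨5, by omega⟩ : Fin n)) + u₂)) = (X : Fin n → MvPolynomial (Fin n) K) :=
    by
      apply pcomp_elem_cancel
      rw [map_neg, neg_inj, map_add, cu]
      simp only [map_add, map_sub, map_mul, aeval_C, aeval_X, algebraMap_eq]
      simp [elem, Fin.mk.injEq]
  refine ⟨key, pcomp (pcomp (pcomp
      (elem (⟨2, by omega⟩ : Fin n)
        (-(X (⟨1, by omega⟩ : Fin n) * X (⟨4, by omega⟩ : Fin n))))
      (elem (⟨0, by omega⟩ : Fin n)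
        (-(X (⟨1, by omega⟩ : Fin n) * X (⟨5, by omega⟩ : Fin n)))))
      (elem (⟨1, by omega⟩ : Fin n)
        (-(X (⟨0, by omega⟩ : Fin n) * X (⟨4, by omega⟩ : Fin n)
          - X (⟨2, by omega⟩ : Fin n) * X (⟨5, by omega⟩ : Fin n)
          + C a * (X (⟨3, by omega⟩ : Fin n) * X (⟨4, by omega⟩ : Fin n))
          - C b * (X (⟨3, by omega⟩ : Fin n) * X (⟨5, by omega⟩ : Fin n)) + u₂))))
      (elem (⟨3, by omega⟩ : Fin n)
        (-(X (⟨4, by omega⟩ : Fin n) * X (⟨5, by omega⟩ : Fin n)))), ?_, ?_⟩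
  · intro i
    rw [key]
    exact congrFun (pcomp_inv_pair c3 (pcomp_inv_pair c1 (pcomp_inv_pair c0 c2))) i
  · intro i
    rw [key]
    exact congrFun (pcomp_inv_pair (pcomp_inv_pair (pcomp_inv_pair c2' c0') c1') c3') i
end

section
/- Let K be a field of characteristic 2 and let H ∈ K[x₁,x₂]² be a quadratic homogeneous polynomial map with nilpotent Jacobian JH (a 2×2 matrix over K[x₁,x₂]). If JH is similar over K to a triangular matrix, then JH = 0. -/
open MvPolynomial

lemma degsum {m : Fin 2 →₀ ℕ} {K : Type*} [Field K] {P : MvPolynomial (Fin 2) K}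
    (hP : P.IsHomogeneous 2) (hm : coeff m P ≠ 0) : m 0 + m 1 = 2 := by
  have h := hP hm
  rw [Finsupp.weight_apply, Finsupp.sum_fintype] at h
  · simpa [Fin.sum_univ_two] using h
  · simp

lemma pderiv_homog2 {K : Type*} [Field K] [CharP K 2] {P : MvPolynomial (Fin 2) K}
    (hP : P.IsHomogeneous 2) :
    pderiv (0 : Fin 2) P = C (coeff (Finsupp.single 0 1 + Finsupp.single 1 1) P) * X 1 ∧
    pderiv (1 : Fin 2) P = C (coeff (Finsupp.single 0 1 + Finsupp.single 1 1) P) * X 0 := by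
  have h2 : ((2 : ℕ) : K) = 0 := by exact_mod_cast CharP.cast_eq_zero K 2
  set m11 : Fin 2 →₀ ℕ := Finsupp.single 0 1 + Finsupp.single 1 1 with hm11
  have hm0 : m11 0 = 1 := by simp [hm11]
  have hm1 : m11 1 = 1 := by simp [hm11]
  have key : ∀ (j : Fin 2) (m : Fin 2 →₀ ℕ), coeff m P ≠ 0 → m ≠ m11 →
      pderiv j (monomial m (coeff m P)) = 0 := by
    intro j m hc hne
    have hdeg := degsum hP hc
    rw [pderiv_monomial]
    have : m j = 0 ∨ m j = 2 := by
      have hj01 : j = 0 ∨ j = 1 := by omega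
      rcases (by rcases hj01 with rfl | rfl <;> omega : m j = 0 ∨ m j = 1 ∨ m j = 2)
        with h | h | h
      · exact Or.inl h
      · exfalso
        apply hne
        have hall : ∀ k : Fin 2, m k = 1 := by
          intro k
          fin_cases k <;> fin_cases j <;> simp_all <;> omega
        ext i
        fin_cases i <;> simp [hall, hm0, hm1]
      · exact Or.inr h
    rcases this with h | h
    · simp [h]
    · rw [h]
      have : coeff m P * ((2 : ℕ) : K) = 0 := by rw [h2, mul_zero]
      rw [this, map_zero]
  have main : ∀ j : Fin 2, pderiv j P = monomial (m11 - Finsupp.single j 1) (coeff m11 P) := by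
    intro j
    conv_lhs => rw [← P.support_sum_monomial_coeff]
    rw [map_sum]
    rw [Finset.sum_eq_single m11]
    · rw [pderiv_monomial]
      fin_cases j <;> simp [hm0, hm1]
    · intro m hm hne
      exact key j m (mem_support_iff.mp hm) hne
    · intro hm
      rw [notMem_support_iff.mp hm]
      simp
  have e0 : m11 - Finsupp.single (0 : Fin 2) 1 = Finsupp.single 1 1 := by
    ext i; fin_cases i <;> simp [hm11]
  have e1 : m11 - Finsupp.single (1 : Fin 2) 1 = Finsupp.single 0 1 := by
    ext i; fin_cases i <;> simp [hm11]
  refine ⟨?_, ?_⟩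
  · rw [main 0, e0, C_mul_X_eq_monomial]
  · rw [main 1, e1, C_mul_X_eq_monomial]

/-- In characteristic 2, if a quadratic homogeneous map `H ∈ K[x₁,x₂]²` has nilpotent
Jacobian which is similar over `K` to a triangular matrix, then `JH = 0`. -/
theorem char_two_triangularizable_nilpotent_jacobian_eq_zero {K : Type*} [Field K]
    [CharP K 2] (H : Fin 2 → MvPolynomial (Fin 2) K) (hH : ∀ i, (H i).IsHomogeneous 2)
    (hnil : IsNilpotent (jacobian H))
    (htri : ∃ T : Matrix (Fin 2) (Fin 2) K, IsUnit T ∧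
      (∃ Tinv : Matrix (Fin 2) (Fin 2) K, T * Tinv = 1 ∧
        (let N := Tinv.map (C : K →+* MvPolynomial (Fin 2) K) * jacobian H *
          T.map (C : K →+* MvPolynomial (Fin 2) K);
        (∀ i j : Fin 2, j < i → N i j = 0) ∨ (∀ i j : Fin 2, i < j → N i j = 0)))) :
    jacobian H = 0 := by
  classical
  set c : Fin 2 → K := fun i => coeff (Finsupp.single 0 1 + Finsupp.single 1 1) (H i) with hc
  have hJ0 : ∀ i, jacobian H i 0 = C (c i) * X 1 := fun i => (pderiv_homog2 (hH i)).1
  have hJ1 : ∀ i, jacobian H i 1 = C (c i) * X 0 := fun i => (pderiv_homog2 (hH i)).2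
  have htr : Matrix.trace (jacobian H) = 0 :=
    (Matrix.isNilpotent_trace_of_isNilpotent hnil).eq_zero
  rw [Matrix.trace_fin_two, hJ0 0, hJ1 1] at htr
  have hc0 : c 0 = 0 := by
    have := congrArg (coeff (Finsupp.single 1 1)) htr
    simpa [C_mul_X_eq_monomial, coeff_monomial, Finsupp.single_eq_single_iff] using this
  have hc1 : c 1 = 0 := by
    have := congrArg (coeff (Finsupp.single 0 1)) htr
    simpa [C_mul_X_eq_monomial, coeff_monomial, Finsupp.single_eq_single_iff] using this
  ext i j
  have hi : i = 0 ∨ i = 1 := by omega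
  have hj : j = 0 ∨ j = 1 := by omega
  rcases hi with rfl | rfl <;> rcases hj with rfl | rfl <;>
    simp [hJ0, hJ1, hc0, hc1]
end
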